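/- arXiv:2409.12280 — 8 statements merged into one kernel-verified Lean document; each statement's English description precedes it below -/
import Mathlib

section
/- Let M ≥ 1 and let σ : {0,1}^M → {0,1}^M be any map (stickiness is not needed). Let γ be the number of strings v ∈ {0,1}^M for which there exists u ≠ v with |ρ(u, σ(u)) ∩ ρ(v, σ(v))| > 0. Then the two-dimensional Lebesgue measure of K_σ ∩ ([1,2] × ℝ) is at least 1 − γ·2^{-M}. -/
open MeasureTheory
open scoped ENNReal

noncomputable def val {M : ℕ} (v : Fin M → Bool) : ℝ :=
  ∑ i : Fin M, (if v i then (1 : ℝ) else 0) * (2 : ℝ)⁻¹ ^ ((i : ℕ) + 1)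

noncomputable def rho {M : ℕ} (v k : Fin M → Bool) : Set (ℝ × ℝ) :=
  {p : ℝ × ℝ | 0 ≤ p.1 ∧ p.1 ≤ 2 ∧
    val v + p.1 * val k ≤ p.2 ∧ p.2 ≤ val v + (2 : ℝ)⁻¹ ^ M + p.1 * val k}

def Sticky {M : ℕ} (σ : (Fin M → Bool) → (Fin M → Bool)) : Prop :=
  ∀ i : ℕ, i ≤ M → ∀ u v : Fin M → Bool,
    (∀ j : Fin M, (j : ℕ) < i → u j = v j) →
    ∀ j : Fin M, (j : ℕ) < i → σ u j = σ v j

noncomputable def Ksigma {M : ℕ} (σ : (Fin M → Bool) → (Fin M → Bool)) : Set (ℝ × ℝ) :=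
  ⋃ v : Fin M → Bool, rho v (σ v)

def Kk (k : ℕ → ℕ) (j : ℕ) : ℕ := ∑ i ∈ Finset.range j, k i

def leafSet (N : ℕ) (k : ℕ → ℕ) : Set (Fin (Kk k N) → Bool) :=
  {t | ∃ s : ℕ → Bool, ∀ j < N, ∀ i : Fin (Kk k N),
    Kk k j ≤ (i : ℕ) → (i : ℕ) < Kk k (j + 1) →
      t i = if (i : ℕ) = Kk k j then s j else !(s j)}

/-- Open core of `ρ(v,k)` restricted to `x ∈ [1,2]`. -/
noncomputable def Pv {M : ℕ} (v k : Fin M → Bool) : Set (ℝ × ℝ) :=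
  regionBetween (fun x => val v + x * val k)
    (fun x => val v + (2 : ℝ)⁻¹ ^ M + x * val k) (Set.Icc 1 2)

lemma Pv_subset {M : ℕ} (v k : Fin M → Bool) :
    Pv v k ⊆ rho v k ∩ (Set.Icc (1 : ℝ) 2 ×ˢ (Set.univ : Set ℝ)) := by
  rintro ⟨x, y⟩ ⟨hx, hy⟩
  simp only [Set.mem_Icc] at hx
  exact ⟨⟨by linarith [hx.1], hx.2, le_of_lt hy.1, le_of_lt hy.2⟩, ⟨hx, trivial⟩⟩

lemma Pv_meas {M : ℕ} (v k : Fin M → Bool) : MeasurableSet (Pv v k) :=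
  measurableSet_regionBetween (by fun_prop) (by fun_prop) measurableSet_Icc

lemma Pv_volume {M : ℕ} (v k : Fin M → Bool) :
    volume (Pv v k) = ENNReal.ofReal ((2 : ℝ)⁻¹ ^ M) := by
  rw [Pv, Measure.volume_eq_prod,
    volume_regionBetween_eq_lintegral' (by fun_prop) (by fun_prop) measurableSet_Icc]
  have h : ∀ y : ℝ,
      ((fun x => val v + (2 : ℝ)⁻¹ ^ M + x * val k) - fun x => val v + x * val k) y
        = (2 : ℝ)⁻¹ ^ M := by
    intro y; simp [Pi.sub_apply]
  simp only [h]
  rw [setLIntegral_const, Real.volume_Icc]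
  norm_num

open scoped Classical in
/-- If `γ` is the number of strings `v` whose parallelogram overlaps (with positive
measure) some other one, then `|K_σ ∩ ([1,2] × ℝ)| ≥ 1 - γ 2^{-M}`. -/
theorem statement1 (M : ℕ) (hM : 1 ≤ M)
    (σ : (Fin M → Bool) → (Fin M → Bool)) :
    ENNReal.ofReal (1 -
        ((Finset.univ.filter fun v : Fin M → Bool =>
          ∃ u : Fin M → Bool, u ≠ v ∧
            0 < volume (rho u (σ u) ∩ rho v (σ v))).card : ℝ) * (2 : ℝ)⁻¹ ^ M)
      ≤ volume (Ksigma σ ∩ (Set.Icc (1 : ℝ) 2 ×ˢ (Set.univ : Set ℝ))) := by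
  classical
  set ε : ℝ := (2 : ℝ)⁻¹ ^ M with hε
  have hε0 : 0 ≤ ε := by positivity
  set Bad : Finset (Fin M → Bool) := Finset.univ.filter fun v : Fin M → Bool =>
      ∃ u : Fin M → Bool, u ≠ v ∧ 0 < volume (rho u (σ u) ∩ rho v (σ v)) with hBadDef
  set Good : Finset (Fin M → Bool) := Finset.univ \ Bad with hGoodDef
  -- good parallelograms are a.e.-disjoint from all others
  have hgood : ∀ v ∈ Good, ∀ u : Fin M → Bool, u ≠ v →
      volume (rho u (σ u) ∩ rho v (σ v)) = 0 := by
    intro v hv u hu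
    simp only [hGoodDef, hBadDef, Finset.mem_sdiff, Finset.mem_filter, Finset.mem_univ,
      true_and, not_exists, not_and] at hv
    have := hv u hu
    exact le_antisymm (not_lt.mp this) zero_le
  -- union bound
  have hsub : (⋃ v ∈ Good, Pv v (σ v)) ⊆
      Ksigma σ ∩ (Set.Icc (1 : ℝ) 2 ×ˢ (Set.univ : Set ℝ)) := by
    intro p hp
    simp only [Set.mem_iUnion] at hp
    obtain ⟨v, _, hp⟩ := hp
    have := Pv_subset v (σ v) hp
    exact ⟨Set.mem_iUnion.mpr ⟨v, this.1⟩, this.2⟩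
  have hdisj : Set.Pairwise (↑Good) (Function.onFun (AEDisjoint volume) fun v => Pv v (σ v)) := by
    intro u hu v hv huv
    refine measure_mono_null ?_ (hgood v hv u huv)
    intro p hp
    exact ⟨(Pv_subset u (σ u) hp.1).1, (Pv_subset v (σ v) hp.2).1⟩
  have hmeas : ∀ v ∈ Good, NullMeasurableSet (Pv v (σ v)) volume :=
    fun v _ => (Pv_meas v (σ v)).nullMeasurableSet
  have hunion : volume (⋃ v ∈ Good, Pv v (σ v)) = (Good.card : ℝ≥0∞) * ENNReal.ofReal ε := by
    rw [measure_biUnion_finset₀ hdisj hmeas]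
    simp only [Pv_volume]
    rw [Finset.sum_const, nsmul_eq_mul]
  -- cardinal arithmetic
  have hcards : Good.card + Bad.card = 2 ^ M := by
    rw [hGoodDef, Finset.card_sdiff_of_subset (Finset.subset_univ _)]
    have hle : Bad.card ≤ Finset.univ.card := Finset.card_le_card (Finset.subset_univ _)
    have : (Finset.univ : Finset (Fin M → Bool)).card = 2 ^ M := by
      simp [Fintype.card_fun]
    omega
  have h2 : (2 : ℝ) ^ M * ε = 1 := by
    rw [hε, ← mul_pow]; norm_num
  have harith : 1 - (Bad.card : ℝ) * ε ≤ (Good.card : ℝ) * ε := by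
    have : (Good.card : ℝ) + Bad.card = (2 : ℝ) ^ M := by
      exact_mod_cast congrArg (Nat.cast : ℕ → ℝ) hcards
    nlinarith
  calc ENNReal.ofReal (1 - (Bad.card : ℝ) * ε)
      ≤ ENNReal.ofReal ((Good.card : ℝ) * ε) := ENNReal.ofReal_le_ofReal harith
    _ = (Good.card : ℝ≥0∞) * ENNReal.ofReal ε := by
        rw [ENNReal.ofReal_mul (by positivity)]
        simp
    _ = volume (⋃ v ∈ Good, Pv v (σ v)) := hunion.symm
    _ ≤ volume (Ksigma σ ∩ (Set.Icc (1 : ℝ) 2 ×ˢ (Set.univ : Set ℝ))) := measure_mono hsub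
end

section
/- Let M ≥ 1 and let u, v, k, k′ ∈ {0,1}^M. If |val(u) − val(v)| > 2^{-M} + 2·|val(k) − val(k′)|, then the parallelograms ρ(u,k) and ρ(v,k′) are disjoint. -/
open MeasureTheory

/-- If the base points are farther apart than `2^{-M} + 2 |val k - val k'|`, the
parallelograms are disjoint. -/
theorem statement4 (M : ℕ) (hM : 1 ≤ M) (u v k k' : Fin M → Bool)
    (h : (2 : ℝ)⁻¹ ^ M + 2 * |val k - val k'| < |val u - val v|) :
    Disjoint (rho u k) (rho v k') := by
  rw [Set.disjoint_left]
  rintro ⟨x, y⟩ ⟨hx0, hx2, h1, h2⟩ ⟨_, _, h3, h4⟩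
  rcases abs_cases (val u - val v) with ⟨e1, _⟩ | ⟨e1, _⟩ <;>
    rcases abs_cases (val k - val k') with ⟨e2, _⟩ | ⟨e2, _⟩ <;>
      rw [e1, e2] at h <;> nlinarith [h]
end

section
/- Let N ≥ 1 and k_1, …, k_N be natural numbers each at least 3, with K_0 = 0, K_j = k_1 + ⋯ + k_j, M = K_N, and leaf set T ⊆ {0,1}^M. For every l with 0 ≤ l ≤ N − 1, if t, t′ ∈ T agree in their first K_l coordinates, then |val(t) − val(t′)| ≤ 2 · 2^{-K_{l+1}}. In particular (the case l = 0), any two elements of T have values within 2 · 2^{-k_1} of each other. -/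
open MeasureTheory

lemma geo_sum (a b : ℕ) (h : a ≤ b) :
    ∑ i ∈ Finset.Ico a b, (2 : ℝ)⁻¹ ^ (i + 1) = (2:ℝ)⁻¹ ^ a - (2:ℝ)⁻¹ ^ b := by
  induction b with
  | zero => interval_cases a; simp
  | succ b ih =>
    rcases Nat.lt_or_ge a (b+1) with hb | hb
    · have hab : a ≤ b := Nat.lt_succ_iff.mp hb
      rw [Finset.sum_Ico_succ_top hab, ih hab]
      ring
    · have : a = b + 1 := le_antisymm h hb
      subst this; simp

/-- extension of `v` to `ℕ`, with weights. -/
noncomputable def Ff {M : ℕ} (v : Fin M → Bool) (i : ℕ) : ℝ :=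
  if h : i < M then (if v ⟨i, h⟩ then (1:ℝ) else 0) * (2:ℝ)⁻¹ ^ (i + 1) else 0

lemma val_eq_sum {M : ℕ} (v : Fin M → Bool) :
    val v = ∑ i ∈ Finset.range M, Ff v i := by
  rw [← Fin.sum_univ_eq_sum_range]
  unfold val Ff
  apply Finset.sum_congr rfl
  intro i _
  rw [dif_pos i.isLt]

lemma Ff_nonneg {M : ℕ} (v : Fin M → Bool) (i : ℕ) : 0 ≤ Ff v i := by
  unfold Ff
  split
  · positivity
  · exact le_refl 0

/-- Two leaves agreeing in their first `K_l` coordinates have values within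
`2 · 2^{-K_{l+1}}` of each other. -/
theorem statement5 (N : ℕ) (hN : 1 ≤ N) (k : ℕ → ℕ) (hk : ∀ i < N, 3 ≤ k i)
    (l : ℕ) (hl : l ≤ N - 1)
    (t t' : Fin (Kk k N) → Bool) (ht : t ∈ leafSet N k) (ht' : t' ∈ leafSet N k)
    (hagree : ∀ i : Fin (Kk k N), (i : ℕ) < Kk k l → t i = t' i) :
    |val t - val t'| ≤ 2 * (2 : ℝ)⁻¹ ^ (Kk k (l + 1)) := by
  obtain ⟨s, hs⟩ := ht
  obtain ⟨s', hs'⟩ := ht'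
  have hlN : l < N := by omega
  have hmono : ∀ a b : ℕ, a ≤ b → Kk k a ≤ Kk k b := by
    intro a b hab
    exact Finset.sum_le_sum_of_subset (Finset.range_subset_range.2 hab)
  have hKsucc : Kk k (l + 1) = Kk k l + k l := Finset.sum_range_succ k l
  have hk3 : 3 ≤ k l := hk l hlN
  have h1 : Kk k l < Kk k (l + 1) := by omega
  have h2 : Kk k (l + 1) ≤ Kk k N := hmono _ _ hlN
  -- block sum computation
  have hblock : ∀ (v : Fin (Kk k N) → Bool) (sv : ℕ → Bool),
      (∀ j < N, ∀ i : Fin (Kk k N), Kk k j ≤ (i : ℕ) → (i : ℕ) < Kk k (j + 1) →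
        v i = if (i : ℕ) = Kk k j then sv j else !(sv j)) →
      ∑ i ∈ Finset.Ico (Kk k l) (Kk k (l + 1)), Ff v i =
        if sv l then (2:ℝ)⁻¹ ^ (Kk k l + 1)
        else (2:ℝ)⁻¹ ^ (Kk k l + 1) - (2:ℝ)⁻¹ ^ (Kk k (l + 1)) := by
    intro v sv hv
    rw [Finset.sum_eq_sum_Ico_succ_bot h1]
    have hbot : Ff v (Kk k l) = (if sv l then (1:ℝ) else 0) * (2:ℝ)⁻¹ ^ (Kk k l + 1) := by
      have hm : Kk k l < Kk k N := lt_of_lt_of_le h1 h2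
      unfold Ff
      rw [dif_pos hm]
      congr 1
      have h3 := hv l hlN ⟨Kk k l, hm⟩ (le_refl _) h1
      rw [if_pos rfl] at h3
      rw [h3]
    have hrest : ∀ i ∈ Finset.Ico (Kk k l + 1) (Kk k (l + 1)),
        Ff v i = (if sv l then (0:ℝ) else 1) * (2:ℝ)⁻¹ ^ (i + 1) := by
      intro i hi
      simp only [Finset.mem_Ico] at hi
      have him : i < Kk k N := lt_of_lt_of_le hi.2 h2
      unfold Ff
      rw [dif_pos him]
      congr 1
      have h3 := hv l hlN ⟨i, him⟩ (by omega : Kk k l ≤ i) hi.2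
      rw [if_neg (by omega : ¬ i = Kk k l)] at h3
      rw [h3]
      cases sv l <;> simp
    rw [hbot, Finset.sum_congr rfl hrest]
    rw [← Finset.mul_sum, geo_sum _ _ (by omega)]
    cases sv l <;> simp <;> ring
  have hBt := hblock t s hs
  have hBt' := hblock t' s' hs'
  -- tail bounds
  have htail : ∀ v : Fin (Kk k N) → Bool,
      0 ≤ ∑ i ∈ Finset.Ico (Kk k (l + 1)) (Kk k N), Ff v i ∧
      ∑ i ∈ Finset.Ico (Kk k (l + 1)) (Kk k N), Ff v i ≤ (2:ℝ)⁻¹ ^ (Kk k (l + 1)) := by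
    intro v
    constructor
    · exact Finset.sum_nonneg fun i _ => Ff_nonneg v i
    · calc ∑ i ∈ Finset.Ico (Kk k (l + 1)) (Kk k N), Ff v i
          ≤ ∑ i ∈ Finset.Ico (Kk k (l + 1)) (Kk k N), (2:ℝ)⁻¹ ^ (i + 1) := by
            apply Finset.sum_le_sum
            intro i _
            unfold Ff
            split
            · split <;> simp
            · positivity
        _ = (2:ℝ)⁻¹ ^ (Kk k (l + 1)) - (2:ℝ)⁻¹ ^ (Kk k N) := geo_sum _ _ h2
        _ ≤ (2:ℝ)⁻¹ ^ (Kk k (l + 1)) := by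
            have : (0:ℝ) ≤ (2:ℝ)⁻¹ ^ (Kk k N) := by positivity
            linarith
  -- decompose vals
  have hdecomp : ∀ v : Fin (Kk k N) → Bool,
      val v = ∑ i ∈ Finset.Ico 0 (Kk k l), Ff v i
        + ∑ i ∈ Finset.Ico (Kk k l) (Kk k (l + 1)), Ff v i
        + ∑ i ∈ Finset.Ico (Kk k (l + 1)) (Kk k N), Ff v i := by
    intro v
    rw [val_eq_sum, Finset.range_eq_Ico,
      ← Finset.sum_Ico_consecutive _ (Nat.zero_le (Kk k (l + 1))) h2,
      ← Finset.sum_Ico_consecutive _ (Nat.zero_le (Kk k l)) (le_of_lt h1)]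
  have hhead : ∑ i ∈ Finset.Ico 0 (Kk k l), Ff t i
      = ∑ i ∈ Finset.Ico 0 (Kk k l), Ff t' i := by
    apply Finset.sum_congr rfl
    intro i hi
    simp only [Finset.mem_Ico] at hi
    have him : i < Kk k N := lt_of_lt_of_le hi.2 (le_trans (le_of_lt h1) h2)
    unfold Ff
    rw [dif_pos him, dif_pos him, hagree ⟨i, him⟩ hi.2]
  have htt := htail t
  have htt' := htail t'
  have hε : (0:ℝ) < (2:ℝ)⁻¹ ^ (Kk k (l + 1)) := by positivity
  rw [hdecomp t, hdecomp t', hhead, abs_le]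
  constructor <;> cases hst : s l <;> cases hst' : s' l <;>
    simp only [hst] at hBt <;> simp only [hst'] at hBt' <;>
    norm_num at hBt hBt' <;> rw [hBt, hBt'] <;> linarith
end

section
/- Let N ≥ 1 and k_1, …, k_N be natural numbers each at least 3, with K_0 = 0, K_j = k_1 + ⋯ + k_j, M = K_N, and leaf set T ⊆ {0,1}^M. Let σ : {0,1}^M → {0,1}^M be a sticky map whose range is contained in T. For every j with 0 ≤ j ≤ N − 1, if u, v ∈ {0,1}^M agree in their first K_j coordinates, then |val(σ(u)) − val(σ(v))| ≤ 2 · 2^{-K_{j+1}} (so the slopes of the corresponding parallelograms ρ(u, σ(u)) and ρ(v, σ(v)) are within 2^{-K_j} · 2 · 2^{-k_{j+1}} of each other). -/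
open MeasureTheory

lemma geo (K M : ℕ) (h : K ≤ M) :
    ∑ i ∈ Finset.Ico K M, ((2:ℝ)⁻¹)^(i+1) = (2:ℝ)⁻¹^K - (2:ℝ)⁻¹^M := by
  induction M, h using Nat.le_induction with
  | base => simp
  | succ n hn ih =>
    rw [Finset.sum_Ico_succ_top hn, ih, pow_succ]
    ring

lemma Kk_mono (k : ℕ → ℕ) : Monotone (Kk k) := fun _ _ h =>
  Finset.sum_le_sum_of_subset (Finset.range_subset_range.2 h)

lemma val_eq {M : ℕ} (x : Fin M → Bool) :
    val x = ∑ i ∈ Finset.range M,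
      (if h : i < M then (if x ⟨i, h⟩ then (1:ℝ) else 0) else 0) * (2:ℝ)⁻¹ ^ (i+1) := by
  rw [val, ← Fin.sum_univ_eq_sum_range]
  exact Finset.sum_congr rfl fun i _ => by simp [i.isLt]

/-- For a sticky map into the leaf set: if `u, v` agree in their first `K_j`
coordinates, then `|val (σ u) - val (σ v)| ≤ 2 · 2^{-K_{j+1}}`. -/
theorem statement8 (N : ℕ) (hN : 1 ≤ N) (k : ℕ → ℕ) (hk : ∀ i < N, 3 ≤ k i)
    (σ : (Fin (Kk k N) → Bool) → (Fin (Kk k N) → Bool))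
    (hσ : Sticky σ) (hran : ∀ v, σ v ∈ leafSet N k)
    (j : ℕ) (hj : j ≤ N - 1)
    (u v : Fin (Kk k N) → Bool)
    (hagree : ∀ i : Fin (Kk k N), (i : ℕ) < Kk k j → u i = v i) :
    |val (σ u) - val (σ v)| ≤ 2 * (2 : ℝ)⁻¹ ^ (Kk k (j + 1)) := by
  have hjN : j < N := by omega
  have hKK' : Kk k j + k j = Kk k (j+1) := (Finset.sum_range_succ k j).symm
  have hkj : 3 ≤ k j := hk j hjN
  have hKltK' : Kk k j < Kk k (j+1) := by omega
  have hK'M : Kk k (j+1) ≤ Kk k N := Kk_mono k (by omega)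
  have hKM : Kk k j ≤ Kk k N := le_trans hKltK'.le hK'M
  have hlow : ∀ i : Fin (Kk k N), (i : ℕ) < Kk k j → σ u i = σ v i := hσ (Kk k j) hKM u v hagree
  obtain ⟨sx, hsx⟩ := hran u
  obtain ⟨sy, hsy⟩ := hran v
  set X : ℕ → ℝ := fun i => if h : i < Kk k N then (if σ u ⟨i, h⟩ then (1:ℝ) else 0) else 0 with hX
  set Y : ℕ → ℝ := fun i => if h : i < Kk k N then (if σ v ⟨i, h⟩ then (1:ℝ) else 0) else 0 with hY
  have hdiff : val (σ u) - val (σ v)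
      = ∑ i ∈ Finset.range (Kk k N), (X i - Y i) * (2:ℝ)⁻¹ ^ (i+1) := by
    rw [val_eq, val_eq, ← Finset.sum_sub_distrib]
    exact Finset.sum_congr rfl fun i _ => by ring
  set e : ℝ := (if sx j then (1:ℝ) else 0) - (if sy j then (1:ℝ) else 0) with he
  have hsplit : ∑ i ∈ Finset.range (Kk k N), (X i - Y i) * (2:ℝ)⁻¹ ^ (i+1)
      = (∑ i ∈ Finset.Ico 0 (Kk k j), (X i - Y i) * (2:ℝ)⁻¹ ^ (i+1))
        + (∑ i ∈ Finset.Ico (Kk k j) (Kk k (j+1)), (X i - Y i) * (2:ℝ)⁻¹ ^ (i+1))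
        + (∑ i ∈ Finset.Ico (Kk k (j+1)) (Kk k N), (X i - Y i) * (2:ℝ)⁻¹ ^ (i+1)) := by
    rw [Finset.range_eq_Ico, ← Finset.sum_Ico_consecutive _ (Nat.zero_le (Kk k (j+1))) hK'M,
        ← Finset.sum_Ico_consecutive _ (Nat.zero_le (Kk k j)) hKltK'.le]
  have h1 : (∑ i ∈ Finset.Ico 0 (Kk k j), (X i - Y i) * (2:ℝ)⁻¹ ^ (i+1)) = 0 := by
    apply Finset.sum_eq_zero
    intro i hi
    have hiK : i < Kk k j := (Finset.mem_Ico.1 hi).2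
    have hiM : i < Kk k N := lt_of_lt_of_le hiK hKM
    have : σ u ⟨i, hiM⟩ = σ v ⟨i, hiM⟩ := hlow ⟨i, hiM⟩ hiK
    simp [hX, hY, hiM, this]
  have h2 : (∑ i ∈ Finset.Ico (Kk k j) (Kk k (j+1)), (X i - Y i) * (2:ℝ)⁻¹ ^ (i+1))
      = e * (2:ℝ)⁻¹ ^ (Kk k (j+1)) := by
    have hterm : ∀ i ∈ Finset.Ico (Kk k j) (Kk k (j+1)),
        (X i - Y i) * (2:ℝ)⁻¹ ^ (i+1) = (if i = Kk k j then e else -e) * (2:ℝ)⁻¹ ^ (i+1) := by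
      intro i hi
      obtain ⟨hi1, hi2⟩ := Finset.mem_Ico.1 hi
      have hiM : i < Kk k N := lt_of_lt_of_le hi2 hK'M
      have hx := hsx j hjN ⟨i, hiM⟩ hi1 hi2
      have hy := hsy j hjN ⟨i, hiM⟩ hi1 hi2
      simp only [hX, hY, dif_pos hiM, hx, hy]
      by_cases hiK : i = Kk k j
      · simp only [hiK, he]
        norm_num
      · simp only [he, Fin.val_mk, if_neg hiK]
        cases sx j <;> cases sy j <;> norm_num
    rw [Finset.sum_congr rfl hterm, Finset.sum_eq_sum_Ico_succ_bot hKltK']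
    have hrest : ∀ i ∈ Finset.Ico (Kk k j + 1) (Kk k (j+1)),
        (if i = Kk k j then e else -e) * (2:ℝ)⁻¹ ^ (i+1) = -e * (2:ℝ)⁻¹ ^ (i+1) := by
      intro i hi
      have : i ≠ Kk k j := by have := (Finset.mem_Ico.1 hi).1; omega
      simp [this]
    rw [Finset.sum_congr rfl hrest, if_pos rfl]
    have hgeo : ∑ i ∈ Finset.Ico (Kk k j + 1) (Kk k (j+1)), (2:ℝ)⁻¹ ^ (i+1)
        = (2:ℝ)⁻¹^(Kk k j + 1) - (2:ℝ)⁻¹^(Kk k (j+1)) := geo _ _ hKltK'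
    calc e * (2:ℝ)⁻¹ ^ (Kk k j + 1)
          + ∑ i ∈ Finset.Ico (Kk k j + 1) (Kk k (j+1)), -e * (2:ℝ)⁻¹ ^ (i+1)
        = e * (2:ℝ)⁻¹ ^ (Kk k j + 1)
          + (-e) * ∑ i ∈ Finset.Ico (Kk k j + 1) (Kk k (j+1)), (2:ℝ)⁻¹ ^ (i+1) := by
          rw [Finset.mul_sum]
      _ = e * (2:ℝ)⁻¹ ^ (Kk k j + 1)
          + (-e) * ((2:ℝ)⁻¹^(Kk k j + 1) - (2:ℝ)⁻¹^(Kk k (j+1))) := by rw [hgeo]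
      _ = e * (2:ℝ)⁻¹ ^ (Kk k (j+1)) := by ring
  have h3 : |∑ i ∈ Finset.Ico (Kk k (j+1)) (Kk k N), (X i - Y i) * (2:ℝ)⁻¹ ^ (i+1)|
      ≤ (2:ℝ)⁻¹ ^ (Kk k (j+1)) := by
    calc |∑ i ∈ Finset.Ico (Kk k (j+1)) (Kk k N), (X i - Y i) * (2:ℝ)⁻¹ ^ (i+1)|
        ≤ ∑ i ∈ Finset.Ico (Kk k (j+1)) (Kk k N), |(X i - Y i) * (2:ℝ)⁻¹ ^ (i+1)| :=
          Finset.abs_sum_le_sum_abs _ _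
      _ ≤ ∑ i ∈ Finset.Ico (Kk k (j+1)) (Kk k N), (2:ℝ)⁻¹ ^ (i+1) := by
          apply Finset.sum_le_sum
          intro i _
          rw [abs_mul]
          have hrpos : (0:ℝ) ≤ (2:ℝ)⁻¹ ^ (i+1) := by positivity
          rw [abs_of_nonneg hrpos]
          have hb : ∀ b : Bool, (if b then (1:ℝ) else 0) = 0 ∨ (if b then (1:ℝ) else 0) = 1 := by
            intro b; cases b <;> simp
          have hXi : X i = 0 ∨ X i = 1 := by
            simp only [hX]
            split
            · exact hb _
            · left; rfl
          have hYi : Y i = 0 ∨ Y i = 1 := by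
            simp only [hY]
            split
            · exact hb _
            · left; rfl
          have : |X i - Y i| ≤ 1 := by
            rcases hXi with h | h <;> rcases hYi with h' | h' <;> rw [h, h'] <;> norm_num
          nlinarith
      _ = (2:ℝ)⁻¹ ^ (Kk k (j+1)) - (2:ℝ)⁻¹ ^ (Kk k N) := geo _ _ hK'M
      _ ≤ (2:ℝ)⁻¹ ^ (Kk k (j+1)) := by
          have : (0:ℝ) ≤ (2:ℝ)⁻¹ ^ (Kk k N) := by positivity
          linarith
  have he1 : |e| ≤ 1 := by
    simp only [he]
    cases sx j <;> cases sy j <;> norm_num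
  rw [hdiff, hsplit, h1, h2, zero_add]
  calc |e * (2:ℝ)⁻¹ ^ (Kk k (j+1))
        + ∑ i ∈ Finset.Ico (Kk k (j+1)) (Kk k N), (X i - Y i) * (2:ℝ)⁻¹ ^ (i+1)|
      ≤ |e * (2:ℝ)⁻¹ ^ (Kk k (j+1))|
        + |∑ i ∈ Finset.Ico (Kk k (j+1)) (Kk k N), (X i - Y i) * (2:ℝ)⁻¹ ^ (i+1)| := abs_add_le _ _
    _ ≤ 1 * (2:ℝ)⁻¹ ^ (Kk k (j+1)) + (2:ℝ)⁻¹ ^ (Kk k (j+1)) := by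
        have hrpos : (0:ℝ) ≤ (2:ℝ)⁻¹ ^ (Kk k (j+1)) := by positivity
        have habs : |e * (2:ℝ)⁻¹ ^ (Kk k (j+1))| = |e| * (2:ℝ)⁻¹ ^ (Kk k (j+1)) := by
          rw [abs_mul, abs_of_nonneg hrpos]
        rw [habs]
        have := mul_le_mul_of_nonneg_right he1 hrpos
        linarith [h3]
    _ = 2 * (2:ℝ)⁻¹ ^ (Kk k (j+1)) := by ring
end

section
/- Let N ≥ 1 and k_1, …, k_N be natural numbers each at least 3, with K_0 = 0, K_j = k_1 + ⋯ + k_j, M = K_N, and leaf set T ⊆ {0,1}^M. Let σ : {0,1}^M → {0,1}^M be a sticky map whose range is contained in T. For every j with 0 ≤ j ≤ N − 1, if u, v ∈ {0,1}^M agree in their first K_j coordinates and the parallelograms ρ(u, σ(u)) and ρ(v, σ(v)) have nonempty intersection, then |val(u) − val(v)| ≤ 4 · 2^{-K_{j+1}} + 2^{-M}. -/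
open MeasureTheory

noncomputable def valTerm {M : ℕ} (v : Fin M → Bool) (i : ℕ) : ℝ :=
  (if h : i < M then (if v ⟨i, h⟩ then (1 : ℝ) else 0) else 0) * (2 : ℝ)⁻¹ ^ (i + 1)

lemma val_eq_range {M : ℕ} (v : Fin M → Bool) :
    val v = ∑ i ∈ Finset.range M, valTerm v i := by
  rw [val, ← Fin.sum_univ_eq_sum_range (valTerm v) M]
  refine Finset.sum_congr rfl fun i _ => ?_
  simp [valTerm, i.isLt]

lemma geomHalfSum (a b : ℕ) (h : a ≤ b) :
    ∑ i ∈ Finset.Ico a b, (2 : ℝ)⁻¹ ^ (i + 1) = (2 : ℝ)⁻¹ ^ a - (2 : ℝ)⁻¹ ^ b := by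
  induction b, h using Nat.le_induction with
  | base => simp
  | succ b hab ih =>
    rw [Finset.sum_Ico_succ_top hab, ih]
    ring

lemma valTerm_nonneg {M : ℕ} (v : Fin M → Bool) (i : ℕ) : 0 ≤ valTerm v i := by
  unfold valTerm
  split_ifs <;> positivity

lemma valTerm_le {M : ℕ} (v : Fin M → Bool) (i : ℕ) : valTerm v i ≤ (2 : ℝ)⁻¹ ^ (i + 1) := by
  have hp : (0:ℝ) ≤ (2 : ℝ)⁻¹ ^ (i + 1) := by positivity
  unfold valTerm
  split_ifs <;> nlinarith

lemma block_sum {M a b : ℕ} (hlt : a < b) (hbM : b ≤ M) (z : Fin M → Bool) (t : Bool)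
    (hz : ∀ i : Fin M, a ≤ (i : ℕ) → (i : ℕ) < b → z i = if (i : ℕ) = a then t else !t) :
    ∑ i ∈ Finset.Ico a b, valTerm z i
      = (if t then (1 : ℝ) else 0) * (2 : ℝ)⁻¹ ^ (a + 1)
        + (if t then (0 : ℝ) else 1) * ((2 : ℝ)⁻¹ ^ (a + 1) - (2 : ℝ)⁻¹ ^ b) := by
  rw [Finset.sum_eq_sum_Ico_succ_bot hlt]
  have haM : a < M := lt_of_lt_of_le hlt hbM
  have hA : valTerm z a = (if t then (1 : ℝ) else 0) * (2 : ℝ)⁻¹ ^ (a + 1) := by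
    have h := hz ⟨a, haM⟩ le_rfl hlt
    simp at h
    simp only [valTerm, dif_pos haM, h]
  have hrest : ∀ i ∈ Finset.Ico (a + 1) b,
      valTerm z i = (if t then (0 : ℝ) else 1) * (2 : ℝ)⁻¹ ^ (i + 1) := by
    intro i hi
    rw [Finset.mem_Ico] at hi
    have hiM : i < M := lt_of_lt_of_le hi.2 hbM
    have h := hz ⟨i, hiM⟩ (le_trans (Nat.le_succ a) hi.1) hi.2
    simp only [Fin.val_mk] at h
    rw [if_neg (by omega)] at h
    simp only [valTerm, dif_pos hiM, h]
    cases t <;> simp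
  rw [Finset.sum_congr rfl hrest, ← Finset.mul_sum, geomHalfSum (a + 1) b hlt, hA]

lemma leaf_diff {M : ℕ} (w w' : Fin M → Bool) (a b : ℕ) (hab : a ≤ b) (hbM : b ≤ M)
    (hpre : ∀ i : Fin M, (i : ℕ) < a → w i = w' i)
    (s s' : Bool)
    (hw : ∀ i : Fin M, a ≤ (i : ℕ) → (i : ℕ) < b → w i = if (i : ℕ) = a then s else !s)
    (hw' : ∀ i : Fin M, a ≤ (i : ℕ) → (i : ℕ) < b → w' i = if (i : ℕ) = a then s' else !s') :
    |val w - val w'| ≤ 2 * (2 : ℝ)⁻¹ ^ b := by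
  have haM : a ≤ M := hab.trans hbM
  have hb0 : (0:ℝ) ≤ (2 : ℝ)⁻¹ ^ b := by positivity
  rw [val_eq_range, val_eq_range, ← Finset.sum_sub_distrib]
  rw [Finset.range_eq_Ico, ← Finset.sum_Ico_consecutive _ (Nat.zero_le b) hbM,
    ← Finset.sum_Ico_consecutive _ (Nat.zero_le a) hab]
  have h1 : ∑ i ∈ Finset.Ico 0 a, (valTerm w i - valTerm w' i) = 0 := by
    apply Finset.sum_eq_zero
    intro i hi
    rw [Finset.mem_Ico] at hi
    have hiM : i < M := lt_of_lt_of_le hi.2 haM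
    have h := hpre ⟨i, hiM⟩ hi.2
    simp only [valTerm, dif_pos hiM, h, sub_self]
  have h3 : |∑ i ∈ Finset.Ico b M, (valTerm w i - valTerm w' i)| ≤ (2 : ℝ)⁻¹ ^ b := by
    calc |∑ i ∈ Finset.Ico b M, (valTerm w i - valTerm w' i)|
        ≤ ∑ i ∈ Finset.Ico b M, |valTerm w i - valTerm w' i| :=
          Finset.abs_sum_le_sum_abs _ _
      _ ≤ ∑ i ∈ Finset.Ico b M, (2 : ℝ)⁻¹ ^ (i + 1) := by
          apply Finset.sum_le_sum
          intro i _
          rw [abs_sub_le_iff]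
          constructor
          · linarith [valTerm_le w i, valTerm_nonneg w' i]
          · linarith [valTerm_le w' i, valTerm_nonneg w i]
      _ = (2 : ℝ)⁻¹ ^ b - (2 : ℝ)⁻¹ ^ M := geomHalfSum b M hbM
      _ ≤ (2 : ℝ)⁻¹ ^ b := by
          have : (0:ℝ) ≤ (2 : ℝ)⁻¹ ^ M := by positivity
          linarith
  have h2 : |∑ i ∈ Finset.Ico a b, (valTerm w i - valTerm w' i)| ≤ (2 : ℝ)⁻¹ ^ b := by
    rcases Nat.eq_or_lt_of_le hab with rfl | hlt
    · simp [hb0]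
    · by_cases hss : s = s'
      · have : ∑ i ∈ Finset.Ico a b, (valTerm w i - valTerm w' i) = 0 := by
          apply Finset.sum_eq_zero
          intro i hi
          rw [Finset.mem_Ico] at hi
          have hiM : i < M := lt_of_lt_of_le hi.2 hbM
          have hwi := hw ⟨i, hiM⟩ hi.1 hi.2
          have hwi' := hw' ⟨i, hiM⟩ hi.1 hi.2
          rw [hss] at hwi
          simp only [valTerm, dif_pos hiM, hwi, hwi', sub_self]
        rw [this, abs_zero]; exact hb0
      · rw [Finset.sum_sub_distrib, block_sum hlt hbM w s hw, block_sum hlt hbM w' s' hw']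
        cases s <;> cases s' <;> simp_all <;>
          rw [abs_of_nonneg (by positivity)]
  calc |∑ i ∈ Finset.Ico 0 a, (valTerm w i - valTerm w' i)
        + ∑ i ∈ Finset.Ico a b, (valTerm w i - valTerm w' i)
        + ∑ i ∈ Finset.Ico b M, (valTerm w i - valTerm w' i)|
      ≤ |∑ i ∈ Finset.Ico 0 a, (valTerm w i - valTerm w' i)
        + ∑ i ∈ Finset.Ico a b, (valTerm w i - valTerm w' i)|
        + |∑ i ∈ Finset.Ico b M, (valTerm w i - valTerm w' i)| := abs_add_le _ _
    _ ≤ (2 : ℝ)⁻¹ ^ b + (2 : ℝ)⁻¹ ^ b := by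
        rw [h1, zero_add]
        exact add_le_add h2 h3
    _ = 2 * (2 : ℝ)⁻¹ ^ b := by ring

lemma Kk_mono_s9 (k : ℕ → ℕ) {a b : ℕ} (h : a ≤ b) : Kk k a ≤ Kk k b :=
  Finset.sum_le_sum_of_subset (Finset.range_subset_range.mpr h)

/-- For a sticky map into the leaf set: if `u, v` agree in their first `K_j`
coordinates and `ρ(u, σ u) ∩ ρ(v, σ v) ≠ ∅`, then
`|val u - val v| ≤ 4 · 2^{-K_{j+1}} + 2^{-M}`. -/
theorem statement9 (N : ℕ) (hN : 1 ≤ N) (k : ℕ → ℕ) (hk : ∀ i < N, 3 ≤ k i)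
    (σ : (Fin (Kk k N) → Bool) → (Fin (Kk k N) → Bool))
    (hσ : Sticky σ) (hran : ∀ v, σ v ∈ leafSet N k)
    (j : ℕ) (hj : j ≤ N - 1)
    (u v : Fin (Kk k N) → Bool)
    (hagree : ∀ i : Fin (Kk k N), (i : ℕ) < Kk k j → u i = v i)
    (hmeet : (rho u (σ u) ∩ rho v (σ v)).Nonempty) :
    |val u - val v| ≤ 4 * (2 : ℝ)⁻¹ ^ (Kk k (j + 1)) + (2 : ℝ)⁻¹ ^ (Kk k N) := by
  have hjN : j + 1 ≤ N := by omega
  have hab : Kk k j ≤ Kk k (j + 1) := Kk_mono_s9 k (Nat.le_succ j)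
  have hbM : Kk k (j + 1) ≤ Kk k N := Kk_mono_s9 k hjN
  have hpre : ∀ i : Fin (Kk k N), (i : ℕ) < Kk k j → σ u i = σ v i :=
    hσ (Kk k j) (hab.trans hbM) u v hagree
  obtain ⟨s, hs⟩ := hran u
  obtain ⟨s', hs'⟩ := hran v
  have hjltN : j < N := by omega
  have hD : |val (σ u) - val (σ v)| ≤ 2 * (2 : ℝ)⁻¹ ^ (Kk k (j + 1)) :=
    leaf_diff (σ u) (σ v) (Kk k j) (Kk k (j + 1)) hab hbM hpre (s j) (s' j)
      (hs j hjltN) (hs' j hjltN)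
  obtain ⟨p, hpu, hpv⟩ := hmeet
  obtain ⟨hx0, hx2, hyu1, hyu2⟩ := hpu
  obtain ⟨_, _, hyv1, hyv2⟩ := hpv
  have hb0 : (0:ℝ) ≤ (2 : ℝ)⁻¹ ^ (Kk k (j + 1)) := by positivity
  have hD1 := (abs_le.mp hD).1
  have hD2 := (abs_le.mp hD).2
  have hxBA : p.1 * (val (σ v) - val (σ u)) ≤ 4 * (2 : ℝ)⁻¹ ^ (Kk k (j + 1)) := by
    calc p.1 * (val (σ v) - val (σ u))
        ≤ p.1 * (2 * (2 : ℝ)⁻¹ ^ (Kk k (j + 1))) :=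
          mul_le_mul_of_nonneg_left (by linarith) hx0
      _ ≤ 2 * (2 * (2 : ℝ)⁻¹ ^ (Kk k (j + 1))) :=
          mul_le_mul_of_nonneg_right hx2 (by linarith)
      _ = 4 * (2 : ℝ)⁻¹ ^ (Kk k (j + 1)) := by ring
  have hxAB : p.1 * (val (σ u) - val (σ v)) ≤ 4 * (2 : ℝ)⁻¹ ^ (Kk k (j + 1)) := by
    calc p.1 * (val (σ u) - val (σ v))
        ≤ p.1 * (2 * (2 : ℝ)⁻¹ ^ (Kk k (j + 1))) :=
          mul_le_mul_of_nonneg_left (by linarith) hx0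
      _ ≤ 2 * (2 * (2 : ℝ)⁻¹ ^ (Kk k (j + 1))) :=
          mul_le_mul_of_nonneg_right hx2 (by linarith)
      _ = 4 * (2 : ℝ)⁻¹ ^ (Kk k (j + 1)) := by ring
  rw [abs_sub_le_iff]
  constructor <;> nlinarith [hyu1, hyu2, hyv1, hyv2, hxBA, hxAB]
end

section
/- For every natural number N ≥ 1 and every δ > 0, there exist natural numbers k_1, …, k_N, each at least 3 (with K_0 = 0, K_j = k_1 + ⋯ + k_j, M = K_N, and associated leaf set T ⊆ {0,1}^M), such that for every sticky map σ : {0,1}^M → {0,1}^M whose range is contained in T, the number of strings v ∈ {0,1}^M for which there exists u ≠ v with |ρ(u, σ(u)) ∩ ρ(v, σ(v))| > 0 is at most δ · 2^M. -/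
open MeasureTheory

namespace S10

lemma geomIco (a b : ℕ) (h : a ≤ b) :
    ∑ l ∈ Finset.Ico a b, ((2:ℝ)⁻¹)^(l+1) = (2:ℝ)⁻¹^a - (2:ℝ)⁻¹^b := by
  induction b, h using Nat.le_induction with
  | base => simp
  | succ b hb ih =>
    rw [Finset.sum_Ico_succ_top hb, ih, pow_succ]
    ring

noncomputable def bitv {M : ℕ} (v : Fin M → Bool) (l : ℕ) : ℝ :=
  if h : l < M then (if v ⟨l, h⟩ then 1 else 0) else 0

lemma val_eq_range {M : ℕ} (v : Fin M → Bool) :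
    val v = ∑ l ∈ Finset.range M, bitv v l * (2:ℝ)⁻¹^(l+1) := by
  rw [val, ← Fin.sum_univ_eq_sum_range (fun l => bitv v l * (2:ℝ)⁻¹^(l+1)) M]
  refine Finset.sum_congr rfl fun l _ => ?_
  simp [bitv, l.isLt]

lemma sum_blocks (f : ℕ → ℝ) (c n : ℕ) :
    ∑ l ∈ Finset.range (n*c), f l
      = ∑ j ∈ Finset.range n, ∑ l ∈ Finset.Ico (j*c) ((j+1)*c), f l := by
  induction n with
  | zero => simp
  | succ n ih =>
    rw [Finset.sum_range_succ, ← ih, Finset.range_eq_Ico, Finset.range_eq_Ico,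
      Finset.sum_Ico_consecutive f (Nat.zero_le _)
        (by nlinarith : n*c ≤ (n+1)*c)]

noncomputable def tailval {M : ℕ} (i : ℕ) (v : Fin M → Bool) : ℝ :=
  ∑ l : Fin M, if i < (l:ℕ) then (if v l then (1:ℝ) else 0) * (2:ℝ)⁻¹^((l:ℕ)+1) else 0

lemma tailval_nonneg {M : ℕ} (i : ℕ) (v : Fin M → Bool) : 0 ≤ tailval i v := by
  refine Finset.sum_nonneg fun l _ => ?_
  by_cases h : i < (l:ℕ) <;> by_cases hv : v l <;> simp [h, hv] <;> positivity

lemma tailval_sum_top {M : ℕ} (i : ℕ) (hi : i < M) :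
    ∑ l : Fin M, (if i < (l:ℕ) then (2:ℝ)⁻¹^((l:ℕ)+1) else 0)
      = (2:ℝ)⁻¹^(i+1) - (2:ℝ)⁻¹^M := by
  rw [Fin.sum_univ_eq_sum_range (fun l => if i < l then (2:ℝ)⁻¹^(l+1) else 0) M,
    ← Finset.sum_filter]
  have h : (Finset.range M).filter (fun l => i < l) = Finset.Ico (i+1) M := by
    ext x; simp only [Finset.mem_filter, Finset.mem_range, Finset.mem_Ico]; omega
  rw [h, geomIco _ _ (by omega)]

lemma tailval_le {M : ℕ} (i : ℕ) (hi : i < M) (v : Fin M → Bool) :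
    tailval i v ≤ (2:ℝ)⁻¹^(i+1) - (2:ℝ)⁻¹^M := by
  rw [← tailval_sum_top i hi]
  refine Finset.sum_le_sum fun l _ => ?_
  by_cases h : i < (l:ℕ) <;> by_cases hv : v l <;> simp [h, hv] <;> positivity

lemma tailval_le_of_false {M : ℕ} (i : ℕ) (hi : i < M) (v : Fin M → Bool) (l : Fin M)
    (hl : i < (l:ℕ)) (hvl : v l = false) :
    tailval i v ≤ (2:ℝ)⁻¹^(i+1) - (2:ℝ)⁻¹^M - (2:ℝ)⁻¹^((l:ℕ)+1) := by
  have h0 : (if i < (l:ℕ) then (if v l then (1:ℝ) else 0) * (2:ℝ)⁻¹^((l:ℕ)+1) else 0) = 0 := by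
    simp [hvl]
  rw [tailval, ← Finset.sum_erase_add Finset.univ _ (Finset.mem_univ l), h0, add_zero]
  have hb : ∀ x ∈ Finset.univ.erase l,
      (if i < (x:Fin M).val then (if v x then (1:ℝ) else 0) * (2:ℝ)⁻¹^((x:Fin M).val+1) else 0)
        ≤ (if i < (x:Fin M).val then (2:ℝ)⁻¹^((x:Fin M).val+1) else 0) := by
    intro x _
    by_cases h : i < (x:ℕ) <;> by_cases hv : v x <;> simp [h, hv] <;> positivity
  refine le_trans (Finset.sum_le_sum hb) ?_
  rw [Finset.sum_erase_eq_sub (Finset.mem_univ l), tailval_sum_top i hi, if_pos hl]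

lemma tailval_ge_of_true {M : ℕ} (i : ℕ) (v : Fin M → Bool) (l : Fin M)
    (hl : i < (l:ℕ)) (hvl : v l = true) :
    (2:ℝ)⁻¹^((l:ℕ)+1) ≤ tailval i v := by
  have := Finset.single_le_sum
    (f := fun x : Fin M => if i < (x:ℕ) then (if v x then (1:ℝ) else 0) * (2:ℝ)⁻¹^((x:ℕ)+1) else 0)
    (fun x _ => by by_cases h : i < (x:ℕ) <;> by_cases hv : v x <;> simp [h, hv] <;> positivity)
    (Finset.mem_univ l)
  rw [tailval]
  simpa [hl, hvl] using this

lemma val_split {M : ℕ} (u v : Fin M → Bool) (i₀ : Fin M)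
    (hag : ∀ l : Fin M, (l:ℕ) < (i₀:ℕ) → u l = v l)
    (hu : u i₀ = true) (hv : v i₀ = false) :
    val u - val v = (2:ℝ)⁻¹^((i₀:ℕ)+1) + tailval ↑i₀ u - tailval ↑i₀ v := by
  have key : ∀ w : Fin M → Bool, val w =
      (∑ l : Fin M, (if (l:ℕ) < (i₀:ℕ) then (if w l then (1:ℝ) else 0) * (2:ℝ)⁻¹^((l:ℕ)+1) else 0))
      + (if w i₀ then (1:ℝ) else 0) * (2:ℝ)⁻¹^((i₀:ℕ)+1) + tailval ↑i₀ w := by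
    intro w
    have hpt : ∀ l : Fin M, (if w l then (1:ℝ) else 0) * (2:ℝ)⁻¹^((l:ℕ)+1)
        = (if (l:ℕ) < (i₀:ℕ) then (if w l then (1:ℝ) else 0) * (2:ℝ)⁻¹^((l:ℕ)+1) else 0)
          + (if l = i₀ then (if w l then (1:ℝ) else 0) * (2:ℝ)⁻¹^((l:ℕ)+1) else 0)
          + (if (i₀:ℕ) < (l:ℕ) then (if w l then (1:ℝ) else 0) * (2:ℝ)⁻¹^((l:ℕ)+1) else 0) := by
      intro l
      rcases lt_trichotomy ((l:ℕ)) ((i₀:ℕ)) with h|h|h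
      · have h1 : ¬ (l = i₀) := by intro he; rw [he] at h; omega
        have h2 : ¬ ((i₀:ℕ) < (l:ℕ)) := by omega
        simp [h, h1, h2]
      · have h1 : l = i₀ := Fin.ext h
        simp [h1]
      · have h1 : ¬ (l = i₀) := by intro he; rw [he] at h; omega
        have h2 : ¬ ((l:ℕ) < (i₀:ℕ)) := by omega
        simp [h1, h2, h]
    rw [val, Finset.sum_congr rfl (fun l _ => hpt l), Finset.sum_add_distrib,
      Finset.sum_add_distrib, Finset.sum_ite_eq' Finset.univ i₀
        (fun l => (if w l then (1:ℝ) else 0) * (2:ℝ)⁻¹^((l:ℕ)+1)), if_pos (Finset.mem_univ i₀)]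
    rfl
  have hlo : (∑ l : Fin M, (if (l:ℕ) < (i₀:ℕ) then (if u l then (1:ℝ) else 0) * (2:ℝ)⁻¹^((l:ℕ)+1) else 0))
      = (∑ l : Fin M, (if (l:ℕ) < (i₀:ℕ) then (if v l then (1:ℝ) else 0) * (2:ℝ)⁻¹^((l:ℕ)+1) else 0)) := by
    refine Finset.sum_congr rfl fun l _ => ?_
    by_cases h : (l:ℕ) < (i₀:ℕ)
    · simp [h, hag l h]
    · simp [h]
  rw [key u, key v, hu, hv, hlo]
  simp
  ring

lemma val_sep {M : ℕ} (u v : Fin M → Bool) (i₀ : Fin M)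
    (hag : ∀ l : Fin M, (l:ℕ) < (i₀:ℕ) → u l = v l) (hne : u i₀ ≠ v i₀) :
    (2:ℝ)⁻¹^M ≤ |val u - val v| := by
  have hiM : (i₀:ℕ) < M := i₀.isLt
  cases hu : u i₀ <;> cases hv : v i₀
  · rw [hu, hv] at hne; exact absurd rfl hne
  · have hsp := val_split v u i₀ (fun l hl => (hag l hl).symm) hv hu
    have h1 := tailval_nonneg (M:=M) ↑i₀ v
    have h2 := tailval_le ↑i₀ hiM u
    rw [abs_sub_comm]
    refine le_trans ?_ (le_abs_self _)
    rw [hsp]; linarith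
  · have hsp := val_split u v i₀ hag hu hv
    have h1 := tailval_nonneg (M:=M) ↑i₀ u
    have h2 := tailval_le ↑i₀ hiM v
    refine le_trans ?_ (le_abs_self _)
    rw [hsp]; linarith
  · rw [hu, hv] at hne; exact absurd rfl hne

end S10
namespace S10

lemma leaf_block {M N c : ℕ} (hc : 0 < c) (hM : M = N * c) (t : Fin M → Bool) (s : ℕ → Bool)
    (hts : ∀ j < N, ∀ i : Fin M, j*c ≤ (i:ℕ) → (i:ℕ) < (j+1)*c →
      t i = if (i:ℕ) = j*c then s j else !(s j))
    {j : ℕ} (hj : j < N) :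
    ∑ l ∈ Finset.Ico (j*c) ((j+1)*c), bitv t l * (2:ℝ)⁻¹^(l+1)
      = if s j then (2:ℝ)⁻¹^(j*c+1) else (2:ℝ)⁻¹^(j*c+1) - (2:ℝ)⁻¹^((j+1)*c) := by
  have hstep : (j+1)*c = j*c + c := by ring
  have hjc : (j+1)*c ≤ M := by
    rw [hM]; exact Nat.mul_le_mul_right c hj
  have hlt : j*c < (j+1)*c := by omega
  rw [Finset.sum_eq_sum_Ico_succ_bot hlt]
  have h1 : j*c < M := lt_of_lt_of_le hlt hjc
  have hb0 : bitv t (j*c) = if s j then 1 else 0 := by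
    rw [bitv, dif_pos h1, hts j hj ⟨j*c, h1⟩ (le_refl _) hlt]
    simp
  have hbl : ∀ l ∈ Finset.Ico (j*c+1) ((j+1)*c),
      bitv t l * (2:ℝ)⁻¹^(l+1) = (if s j then 0 else (2:ℝ)⁻¹^(l+1)) := by
    intro l hl
    rw [Finset.mem_Ico] at hl
    have h2 : l < M := lt_of_lt_of_le hl.2 hjc
    rw [bitv, dif_pos h2, hts j hj ⟨l, h2⟩ (by simp only [Fin.val_mk]; omega)
      (by simp only [Fin.val_mk]; exact hl.2)]
    have h3 : ¬ ((l:ℕ) = j*c) := by omega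
    cases hsj : s j <;> simp [h3, hsj]
  rw [Finset.sum_congr rfl hbl, hb0]
  cases hsj : s j
  · simp only [hsj, Bool.false_eq_true, if_false]
    rw [geomIco (j*c+1) ((j+1)*c) (by omega)]
    ring
  · simp only [hsj, if_true]
    simp

lemma slope_bound {M N c : ℕ} (hc : 0 < c) (hM : M = N * c)
    (t t' : Fin M → Bool) (s s' : ℕ → Bool)
    (hts : ∀ j < N, ∀ i : Fin M, j*c ≤ (i:ℕ) → (i:ℕ) < (j+1)*c →
      t i = if (i:ℕ) = j*c then s j else !(s j))
    (hts' : ∀ j < N, ∀ i : Fin M, j*c ≤ (i:ℕ) → (i:ℕ) < (j+1)*c →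
      t' i = if (i:ℕ) = j*c then s' j else !(s' j))
    (i : ℕ) (hag : ∀ l : Fin M, (l:ℕ) < i → t l = t' l) :
    |val t - val t'| ≤ ∑ j ∈ Finset.range N, (if i ≤ j*c then (2:ℝ)⁻¹^((j+1)*c) else 0) := by
  subst hM
  rw [val_eq_range, val_eq_range, sum_blocks, sum_blocks, ← Finset.sum_sub_distrib]
  refine (Finset.abs_sum_le_sum_abs _ _).trans (Finset.sum_le_sum fun j hj => ?_)
  rw [Finset.mem_range] at hj
  rw [leaf_block hc rfl t s hts hj, leaf_block hc rfl t' s' hts' hj]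
  by_cases hij : i ≤ j*c
  · rw [if_pos hij]
    have h0 : (0:ℝ) ≤ (2:ℝ)⁻¹^((j+1)*c) := by positivity
    cases hs1 : s j <;> cases hs2 : s' j <;>
      simp only [hs1, hs2, Bool.false_eq_true, if_false, if_true] <;>
      first
        | (rw [sub_self, abs_zero]; exact h0)
        | (rw [show (2:ℝ)⁻¹^(j*c+1) - ((2:ℝ)⁻¹^(j*c+1) - (2:ℝ)⁻¹^((j+1)*c)) = (2:ℝ)⁻¹^((j+1)*c) by ring,
            abs_of_nonneg h0])
        | (rw [show (2:ℝ)⁻¹^(j*c+1) - (2:ℝ)⁻¹^((j+1)*c) - (2:ℝ)⁻¹^(j*c+1) = -((2:ℝ)⁻¹^((j+1)*c)) by ring,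
            abs_neg, abs_of_nonneg h0])
  · rw [if_neg hij]
    have hstep : (j+1)*c = j*c + c := by ring
    have hjcM : j*c < N*c := by
      have : (j+1)*c ≤ N*c := Nat.mul_le_mul_right c hj
      omega
    have he := hag ⟨j*c, hjcM⟩ (by simpa using (by omega : j*c < i))
    have e1 := hts j hj ⟨j*c, hjcM⟩ (le_refl _) (by simp only [Fin.val_mk]; omega)
    have e2 := hts' j hj ⟨j*c, hjcM⟩ (le_refl _) (by simp only [Fin.val_mk]; omega)
    rw [e1, e2] at he
    simp only [Fin.val_mk, if_pos] at he
    rw [he, sub_self, abs_zero]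

def mIdx (c i : ℕ) (hc : 0 < c) : ℕ :=
  Nat.find (p := fun j => i ≤ j * c) ⟨i, Nat.le_mul_of_pos_right i hc⟩

lemma mIdx_le (c i : ℕ) (hc : 0 < c) : i ≤ mIdx c i hc * c :=
  Nat.find_spec (p := fun j => i ≤ j * c) ⟨i, Nat.le_mul_of_pos_right i hc⟩

lemma mIdx_min (c i : ℕ) (hc : 0 < c) {j : ℕ} (h : i ≤ j * c) : mIdx c i hc ≤ j :=
  Nat.find_min' (p := fun j => i ≤ j * c) ⟨i, Nat.le_mul_of_pos_right i hc⟩ h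

lemma tail_geom {N c m i : ℕ} (hc : 0 < c) (hmin : ∀ j, i ≤ j*c → m ≤ j) :
    ∑ j ∈ Finset.range N, (if i ≤ j*c then (2:ℝ)⁻¹^((j+1)*c) else 0)
      ≤ 2 * (2:ℝ)⁻¹^((m+1)*c) := by
  rw [← Finset.sum_filter]
  have hsub : (Finset.range N).filter (fun j => i ≤ j*c) ⊆ Finset.Ico m N := by
    intro j hj
    rw [Finset.mem_filter, Finset.mem_range] at hj
    rw [Finset.mem_Ico]
    exact ⟨hmin j hj.2, hj.1⟩
  refine le_trans (Finset.sum_le_sum_of_subset_of_nonneg hsub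
    (fun _ _ _ => by positivity)) ?_
  rw [Finset.sum_Ico_eq_sum_range]
  have hterm : ∀ d, (2:ℝ)⁻¹^((m+d+1)*c) ≤ (2:ℝ)⁻¹^((m+1)*c) * (2:ℝ)⁻¹^d := by
    intro d
    rw [← pow_add]
    refine pow_le_pow_of_le_one (by norm_num) (by norm_num) ?_
    have hd : d ≤ d * c := Nat.le_mul_of_pos_right d hc
    calc (m+1)*c + d ≤ (m+1)*c + d*c := by omega
      _ = (m+d+1)*c := by ring
  refine le_trans (Finset.sum_le_sum fun d _ => hterm d) ?_
  rw [← Finset.mul_sum]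
  have hg : ∑ d ∈ Finset.range (N-m), (2:ℝ)⁻¹^d ≤ 2 := by
    have := sum_geometric_two_le (N-m)
    simpa [one_div] using this
  calc (2:ℝ)⁻¹^((m+1)*c) * ∑ d ∈ Finset.range (N-m), (2:ℝ)⁻¹^d
      ≤ (2:ℝ)⁻¹^((m+1)*c) * 2 := mul_le_mul_of_nonneg_left hg (by positivity)
    _ = 2 * (2:ℝ)⁻¹^((m+1)*c) := mul_comm _ _

end S10
namespace S10

lemma graph_null (a b : ℝ) : volume {p : ℝ × ℝ | p.2 = a + p.1 * b} = 0 := by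
  have hm : MeasurableSet {p : ℝ × ℝ | p.2 = a + p.1 * b} :=
    measurableSet_eq_fun measurable_snd (by fun_prop)
  rw [MeasureTheory.Measure.volume_eq_prod ℝ ℝ, MeasureTheory.Measure.prod_apply hm]
  have hsl : ∀ x : ℝ, (Prod.mk x ⁻¹' {p : ℝ × ℝ | p.2 = a + p.1 * b}) = {a + x * b} := by
    intro x
    ext y
    simp [Set.mem_preimage, Set.mem_setOf_eq]
  simp [hsl]

lemma overlap_exists {M : ℕ} (u v k1 k2 : Fin M → Bool)
    (h : 0 < volume (rho u k1 ∩ rho v k2)) :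
    ∃ x : ℝ, 0 ≤ x ∧ x ≤ 2 ∧
      |(val u - val v) + x * (val k1 - val k2)| < (2:ℝ)⁻¹ ^ M := by
  by_contra hcon
  push_neg at hcon
  have hsub : rho u k1 ∩ rho v k2 ⊆
      {p : ℝ × ℝ | p.2 = val u + p.1 * val k1} ∪ {p : ℝ × ℝ | p.2 = val v + p.1 * val k2} := by
    rintro ⟨x, y⟩ ⟨h1, h2⟩
    simp only [rho, Set.mem_setOf_eq] at h1 h2
    obtain ⟨hx0, hx2, h1l, h1u⟩ := h1
    obtain ⟨_, _, h2l, h2u⟩ := h2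
    have hd := hcon x hx0 hx2
    rcases abs_cases ((val u - val v) + x * (val k1 - val k2)) with ⟨heq, _⟩ | ⟨heq, _⟩
    · left
      show y = val u + x * val k1
      rw [heq] at hd
      apply le_antisymm <;> linarith
    · right
      show y = val v + x * val k2
      rw [heq] at hd
      apply le_antisymm <;> linarith
  have h0 : volume (rho u k1 ∩ rho v k2) = 0 := by
    refine measure_mono_null hsub ?_
    exact measure_union_null (graph_null _ _) (graph_null _ _)
  rw [h0] at h
  exact lt_irrefl _ h

end S10
namespace S10

open scoped Classical in
lemma main_count {N c M : ℕ} (hN : 1 ≤ N) (hc3 : 3 ≤ c) (hM : M = N * c)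
    (σ : (Fin M → Bool) → (Fin M → Bool)) (hσ : Sticky σ)
    (hleaf : ∀ v, ∃ s : ℕ → Bool, ∀ j < N, ∀ i : Fin M,
      j*c ≤ (i:ℕ) → (i:ℕ) < (j+1)*c → σ v i = if (i:ℕ) = j*c then s j else !(s j)) :
    (Finset.univ.filter fun v : Fin M → Bool =>
        ∃ u : Fin M → Bool, u ≠ v ∧ 0 < volume (rho u (σ u) ∩ rho v (σ v))).card
      ≤ (N*c) * 2 ^ (M - (c-3)) := by
  subst hM
  have hc0 : 0 < c := by omega
  have hcM : c ≤ N*c := le_trans (by omega) (Nat.le_mul_of_pos_left c hN)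
  have hM0 : 0 < N*c := by omega
  set L : ℕ → ℕ := fun i => (mIdx c i hc0 + 1) * c - 3 with hL
  set B : Fin (N*c) → Finset (Fin (N*c) → Bool) := fun i₀ =>
    Finset.univ.filter (fun v => ∀ l : Fin (N*c),
      (i₀:ℕ) < (l:ℕ) → (l:ℕ) ≤ L (i₀:ℕ) → v l = ! v i₀) with hB
  set I : Finset (Fin (N*c)) := Finset.univ.filter (fun i₀ => (i₀:ℕ) + c ≤ N*c) with hI
  have cover : (Finset.univ.filter fun v : Fin (N*c) → Bool =>
      ∃ u : Fin (N*c) → Bool, u ≠ v ∧ 0 < volume (rho u (σ u) ∩ rho v (σ v)))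
      ⊆ I.biUnion B := by
    intro v hv
    rw [Finset.mem_filter] at hv
    obtain ⟨-, u, hune, hpos⟩ := hv
    have hDne : (Finset.univ.filter fun l : Fin (N*c) => u l ≠ v l).Nonempty := by
      rcases Function.ne_iff.mp hune with ⟨l, hl⟩
      exact ⟨l, Finset.mem_filter.mpr ⟨Finset.mem_univ _, hl⟩⟩
    set i₀ := (Finset.univ.filter fun l : Fin (N*c) => u l ≠ v l).min' hDne with hi₀
    have hne : u i₀ ≠ v i₀ := (Finset.mem_filter.mp (Finset.min'_mem _ hDne)).2
    have hag : ∀ l : Fin (N*c), (l:ℕ) < (i₀:ℕ) → u l = v l := by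
      intro l hl
      by_contra hlne
      have h1 : i₀ ≤ l := Finset.min'_le
        (Finset.univ.filter fun l : Fin (N*c) => u l ≠ v l) l
        (Finset.mem_filter.mpr ⟨Finset.mem_univ _, hlne⟩)
      rw [Fin.le_def] at h1
      omega
    have hagσ : ∀ l : Fin (N*c), (l:ℕ) < (i₀:ℕ) → σ u l = σ v l :=
      fun l hl => hσ (i₀:ℕ) i₀.isLt.le u v hag l hl
    obtain ⟨x, hx0, hx2, hxlt⟩ := overlap_exists u v (σ u) (σ v) hpos
    have habs : |val u - val v| < (2:ℝ)⁻¹^(N*c) + 2 * |val (σ u) - val (σ v)| := by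
      have h1 := abs_add_le ((val u - val v) + x * (val (σ u) - val (σ v)))
        (-(x * (val (σ u) - val (σ v))))
      rw [add_neg_cancel_right, abs_neg, abs_mul] at h1
      have hxa : |x| ≤ 2 := abs_le.mpr ⟨by linarith, hx2⟩
      have hD : (0:ℝ) ≤ |val (σ u) - val (σ v)| := abs_nonneg _
      nlinarith [mul_le_mul_of_nonneg_right hxa hD]
    obtain ⟨s, hs⟩ := hleaf u
    obtain ⟨s', hs'⟩ := hleaf v
    have hslope0 : |val (σ u) - val (σ v)| ≤
        ∑ j ∈ Finset.range N, (if (i₀:ℕ) ≤ j*c then (2:ℝ)⁻¹^((j+1)*c) else 0) :=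
      slope_bound hc0 rfl _ _ s s' hs hs' (i₀:ℕ) hagσ
    by_cases hcase : (i₀:ℕ) + c ≤ N*c
    · refine Finset.mem_biUnion.mpr ⟨i₀, Finset.mem_filter.mpr ⟨Finset.mem_univ _, hcase⟩, ?_⟩
      rw [hB]
      simp only [Finset.mem_filter, Finset.mem_univ, true_and]
      intro l hl1 hl2
      set m := mIdx c (i₀:ℕ) hc0 with hm
      have him : (i₀:ℕ) ≤ m*c := mIdx_le c (i₀:ℕ) hc0
      have hmin : ∀ j, (i₀:ℕ) ≤ j*c → m ≤ j := fun j hj => mIdx_min c (i₀:ℕ) hc0 hj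
      have hslope : |val (σ u) - val (σ v)| ≤ 2*(2:ℝ)⁻¹^((m+1)*c) :=
        hslope0.trans (tail_geom hc0 hmin)
      have hstep : (m+1)*c = m*c + c := by ring
      have hLval : L (i₀:ℕ) = (m+1)*c - 3 := by rw [hL]
      rw [hLval] at hl2
      have hkey : ¬ ((2:ℝ)⁻¹^((l:ℕ)+1) < 4 * (2:ℝ)⁻¹^((m+1)*c)) := by
        intro hk
        have h4 : (4:ℝ) * (2:ℝ)⁻¹^((m+1)*c) = (2:ℝ)⁻¹^((m+1)*c - 2) := by
          obtain ⟨Y, hY⟩ : ∃ Y, (m+1)*c = Y + 2 := ⟨(m+1)*c - 2, by omega⟩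
          rw [hY, Nat.add_sub_cancel, pow_add]
          norm_num
          ring
        have hle : ((2:ℝ)⁻¹)^((m+1)*c - 2) ≤ (2:ℝ)⁻¹^((l:ℕ)+1) :=
          pow_le_pow_of_le_one (by norm_num) (by norm_num) (by omega)
        rw [h4] at hk
        linarith
      cases hvi : v i₀
      · cases hvl : v l
        · exfalso
          have hui : u i₀ = true := by
            cases hu : u i₀
            · rw [hu, hvi] at hne; exact absurd rfl hne
            · rfl
          have hsp := val_split u v i₀ hag hui hvi
          have hFu := tailval_nonneg (M := N*c) (i₀:ℕ) u
          have hFv := tailval_le_of_false (i₀:ℕ) i₀.isLt v l hl1 hvl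
          have hlow : (2:ℝ)⁻¹^(N*c) + (2:ℝ)⁻¹^((l:ℕ)+1) ≤ val u - val v := by
            rw [hsp]; linarith
          have hup : val u - val v ≤ |val u - val v| := le_abs_self _
          exact hkey (by linarith)
        · simp [hvl, hvi]
      · cases hvl : v l
        · simp [hvl, hvi]
        · exfalso
          have hui : u i₀ = false := by
            cases hu : u i₀
            · rfl
            · rw [hu, hvi] at hne; exact absurd rfl hne
          have hsp := val_split v u i₀ (fun l' hl' => (hag l' hl').symm) hvi hui
          have hFu := tailval_le (i₀:ℕ) i₀.isLt u
          have hFv := tailval_ge_of_true (i₀:ℕ) v l hl1 hvl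
          have hlow : (2:ℝ)⁻¹^(N*c) + (2:ℝ)⁻¹^((l:ℕ)+1) ≤ val v - val u := by
            rw [hsp]; linarith
          have hup : val v - val u ≤ |val u - val v| := by
            rw [abs_sub_comm]; exact le_abs_self _
          exact hkey (by linarith)
    · exfalso
      have hS0 : ∑ j ∈ Finset.range N, (if (i₀:ℕ) ≤ j*c then (2:ℝ)⁻¹^((j+1)*c) else 0) = 0 := by
        refine Finset.sum_eq_zero fun j hj => ?_
        rw [Finset.mem_range] at hj
        have hj1 : (j+1)*c ≤ N*c := Nat.mul_le_mul_right c hj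
        have hstep : (j+1)*c = j*c + c := by ring
        rw [if_neg (by omega)]
      have hB0 : |val (σ u) - val (σ v)| ≤ 0 := le_trans hslope0 (le_of_eq hS0)
      have hsep := val_sep u v i₀ hag hne
      linarith [abs_nonneg (val (σ u) - val (σ v))]
  have cardB : ∀ i₀ ∈ I, (B i₀).card ≤ 2 ^ (N*c - (c-3)) := by
    intro i₀ hi₀
    have hi : (i₀:ℕ) + c ≤ N*c := by
      rw [hI] at hi₀
      exact (Finset.mem_filter.mp hi₀).2
    set m := mIdx c (i₀:ℕ) hc0 with hm
    have him : (i₀:ℕ) ≤ m*c := mIdx_le c (i₀:ℕ) hc0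
    have hstep : (m+1)*c = m*c + c := by ring
    have hLi : L (i₀:ℕ) = (m+1)*c - 3 := by rw [hL]
    set P : Fin (N*c) → Prop := fun l => (i₀:ℕ) < (l:ℕ) ∧ (l:ℕ) ≤ L (i₀:ℕ) with hP
    have hcard1 : (B i₀).card ≤ Fintype.card ({l : Fin (N*c) // ¬ P l} → Bool) := by
      rw [← Finset.card_univ]
      refine Finset.card_le_card_of_injOn
        (fun v (s : {l : Fin (N*c) // ¬ P l}) => v s.1)
        (fun _ _ => Finset.mem_univ _) ?_
      intro v hv w hw hvw
      rw [Finset.mem_coe, hB, Finset.mem_filter] at hv hw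
      funext l
      by_cases hPl : P l
      · have hnotPi : ¬ P i₀ := fun hcon => absurd hcon.1 (lt_irrefl _)
        have h1 : v i₀ = w i₀ := congrFun hvw ⟨i₀, hnotPi⟩
        rw [hv.2 l hPl.1 hPl.2, hw.2 l hPl.1 hPl.2, h1]
      · exact congrFun hvw ⟨l, hPl⟩
    have hcard2 : Fintype.card ({l : Fin (N*c) // ¬ P l} → Bool)
        = 2 ^ Fintype.card {l : Fin (N*c) // ¬ P l} := by
      simp [Fintype.card_fun]
    have hPge : c - 3 ≤ (Finset.univ.filter P).card := by
      have hcI : (Finset.Ioc (i₀:ℕ) ((i₀:ℕ) + (c-3))).card = c - 3 := by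
        simp [Nat.card_Ioc]
      rw [← hcI]
      refine Finset.card_le_card_of_injOn
        (fun n => (⟨n % (N*c), Nat.mod_lt _ hM0⟩ : Fin (N*c))) ?_ ?_
      · intro n hn
        rw [Finset.mem_coe, Finset.mem_Ioc] at hn
        have hnM : n < N*c := by omega
        rw [Finset.mem_coe, Finset.mem_filter]
        refine ⟨Finset.mem_univ _, ?_, ?_⟩
        · simp only [Fin.val_mk, Nat.mod_eq_of_lt hnM]
          omega
        · simp only [Fin.val_mk, Nat.mod_eq_of_lt hnM, hLi]
          omega
      · intro n hn n' hn' hfeq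
        rw [Finset.mem_coe, Finset.mem_Ioc] at hn hn'
        have h1 : n % (N*c) = n' % (N*c) := by
          have := congrArg Fin.val hfeq
          simpa using this
        rw [Nat.mod_eq_of_lt (by omega), Nat.mod_eq_of_lt (by omega)] at h1
        exact h1
    have hsplit := Finset.card_filter_add_card_filter_not
      (s := (Finset.univ : Finset (Fin (N*c)))) (p := P)
    have huniv : (Finset.univ : Finset (Fin (N*c))).card = N*c := by simp
    have hsubc : Fintype.card {l : Fin (N*c) // ¬ P l} ≤ N*c - (c-3) := by
      rw [Fintype.card_subtype]
      omega
    calc (B i₀).card ≤ Fintype.card ({l : Fin (N*c) // ¬ P l} → Bool) := hcard1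
      _ = 2 ^ Fintype.card {l : Fin (N*c) // ¬ P l} := hcard2
      _ ≤ 2 ^ (N*c - (c-3)) := Nat.pow_le_pow_right (by norm_num) hsubc
  calc (Finset.univ.filter fun v : Fin (N*c) → Bool =>
        ∃ u : Fin (N*c) → Bool, u ≠ v ∧ 0 < volume (rho u (σ u) ∩ rho v (σ v))).card
      ≤ (I.biUnion B).card := Finset.card_le_card cover
    _ ≤ ∑ i₀ ∈ I, (B i₀).card := Finset.card_biUnion_le
    _ ≤ ∑ _i₀ ∈ I, 2 ^ (N*c - (c-3)) := Finset.sum_le_sum cardB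
    _ = I.card * 2 ^ (N*c - (c-3)) := by rw [Finset.sum_const, smul_eq_mul]
    _ ≤ (N*c) * 2 ^ (N*c - (c-3)) := by
        refine Nat.mul_le_mul_right _ ?_
        calc I.card ≤ (Finset.univ : Finset (Fin (N*c))).card := Finset.card_filter_le _ _
          _ = N*c := by simp

end S10
namespace S10

lemma exists_c (N : ℕ) (hN : 1 ≤ N) (δ : ℝ) (hδ : 0 < δ) :
    ∃ c : ℕ, 3 ≤ c ∧ ((N:ℝ)*c) * 8 * (2:ℝ)⁻¹^c ≤ δ := by
  obtain ⟨a₀, ha₀⟩ := pow_unbounded_of_one_lt (R := ℝ) ((8*(2*N+1))/δ) one_lt_two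
  set a := max a₀ 2 with ha
  have haa : (8*(2*(N:ℝ)+1))/δ < 2^a :=
    lt_of_lt_of_le ha₀ (pow_le_pow_right₀ one_le_two (le_max_left _ _))
  have ha2 : 2 ≤ a := le_max_right _ _
  have h1 : 8*(2*(N:ℝ)+1) < δ * 2^a := by
    rw [div_lt_iff₀ hδ] at haa
    linarith
  have hac : (a:ℝ) ≤ 2^a := by
    have h := (Nat.lt_two_pow_self (n := a)).le
    have h2 : ((a:ℕ):ℝ) ≤ ((2^a : ℕ):ℝ) := by exact_mod_cast h
    push_cast at h2
    exact h2
  refine ⟨2*a, by omega, ?_⟩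
  have hpa : (0:ℝ) < 2^a := by positivity
  have h2 : ((N:ℝ)*(2*a)) * 8 ≤ δ * 2^(2*a) := by
    have e1 : (2:ℝ)^(2*a) = 2^a*2^a := by rw [two_mul, pow_add]
    have hN0 : (0:ℝ) ≤ N := Nat.cast_nonneg N
    have hb1 : 16*(N:ℝ)*a ≤ 16*(N:ℝ)*2^a := by nlinarith
    have hb2 : 8*(2*(N:ℝ)+1)*2^a < (δ*2^a)*2^a := by nlinarith
    nlinarith
  have ht : (2:ℝ)⁻¹^(2*a) = ((2:ℝ)^(2*a))⁻¹ := by rw [inv_pow]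
  have hp2 : (0:ℝ) < 2^(2*a) := by positivity
  calc ((N:ℝ)*(2*a:ℕ)) * 8 * (2:ℝ)⁻¹^(2*a)
      ≤ (δ * 2^(2*a)) * (2:ℝ)⁻¹^(2*a) := by
        refine mul_le_mul_of_nonneg_right ?_ (by positivity)
        push_cast
        exact h2
    _ = δ := by
        rw [ht, mul_assoc, mul_inv_cancel₀ (ne_of_gt hp2), mul_one]

end S10

open scoped Classical in
/-- For every `N ≥ 1` and `δ > 0` there are `k_1, …, k_N ≥ 3` such that for every
sticky map `σ` into the leaf set, the number of `v` whose parallelogram overlaps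
(with positive measure) some other one is at most `δ · 2^M`. -/
theorem statement10 (N : ℕ) (hN : 1 ≤ N) (δ : ℝ) (hδ : 0 < δ) :
    ∃ k : ℕ → ℕ, (∀ i < N, 3 ≤ k i) ∧
      ∀ σ : (Fin (Kk k N) → Bool) → (Fin (Kk k N) → Bool),
        Sticky σ → (∀ v, σ v ∈ leafSet N k) →
        ((Finset.univ.filter fun v : Fin (Kk k N) → Bool =>
            ∃ u : Fin (Kk k N) → Bool, u ≠ v ∧
              0 < volume (rho u (σ u) ∩ rho v (σ v))).card : ℝ)
          ≤ δ * 2 ^ (Kk k N) := by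
  obtain ⟨c, hc3, hδc⟩ := S10.exists_c N hN δ hδ
  have hc0 : 0 < c := by omega
  refine ⟨fun _ => c, fun i _ => hc3, ?_⟩
  intro σ hσ hrange
  have hKj : ∀ j, Kk (fun _ => c) j = j * c := by
    intro j
    simp [Kk, Finset.sum_const, smul_eq_mul, mul_comm]
  have hleaf' : ∀ v, ∃ s : ℕ → Bool, ∀ j < N, ∀ i : Fin (Kk (fun _ => c) N),
      j*c ≤ (i:ℕ) → (i:ℕ) < (j+1)*c → σ v i = if (i:ℕ) = j*c then s j else !(s j) := by
    intro v
    obtain ⟨s, hs⟩ := hrange v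
    refine ⟨s, fun j hj i h1 h2 => ?_⟩
    have h3 := hs j hj i (by rw [hKj j]; exact h1) (by rw [hKj (j+1)]; exact h2)
    rw [h3, hKj j]
  have hcnt := S10.main_count hN hc3 (hKj N) σ hσ hleaf'
  have hM : Kk (fun _ => c) N = N * c := hKj N
  have hcM : c ≤ N*c := le_trans (by omega) (Nat.le_mul_of_pos_left c hN)
  have hcastR : ((Finset.univ.filter fun v : Fin (Kk (fun _ => c) N) → Bool =>
      ∃ u : Fin (Kk (fun _ => c) N) → Bool, u ≠ v ∧
        0 < volume (rho u (σ u) ∩ rho v (σ v))).card : ℝ)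
      ≤ ((N:ℝ)*c) * 2 ^ (Kk (fun _ => c) N - (c-3)) := by
    exact_mod_cast hcnt
  refine le_trans hcastR ?_
  -- pure arithmetic now
  have h2 : (2:ℝ)^(c-3) * 8 = 2^c := by
    obtain ⟨Y, hY⟩ : ∃ Y, c = Y + 3 := ⟨c-3, by omega⟩
    rw [hY, Nat.add_sub_cancel, pow_add]
    norm_num
  have ht : (2:ℝ)⁻¹^c * 2^(c-3) = 1/8 := by
    rw [inv_pow, ← h2]
    rw [mul_inv]
    field_simp
  have hA : ((N:ℝ)*c) ≤ δ * 2^(c-3) := by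
    have hmul := mul_le_mul_of_nonneg_right hδc
      (show (0:ℝ) ≤ 2^(c-3) by positivity)
    have he : ((N:ℝ)*c*8*(2:ℝ)⁻¹^c)*2^(c-3) = (N:ℝ)*c := by
      rw [mul_assoc, ht]; ring
    rw [he] at hmul
    exact hmul
  have h1 : (2:ℝ)^(Kk (fun _ => c) N - (c-3)) * 2^(c-3) = 2^(Kk (fun _ => c) N) := by
    rw [← pow_add]
    congr 1
    rw [hM]
    omega
  calc ((N:ℝ)*c) * 2^(Kk (fun _ => c) N - (c-3))
      ≤ (δ*2^(c-3)) * 2^(Kk (fun _ => c) N - (c-3)) :=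
        mul_le_mul_of_nonneg_right hA (by positivity)
    _ = δ*(2^(Kk (fun _ => c) N - (c-3)) * 2^(c-3)) := by ring
    _ = δ * 2^(Kk (fun _ => c) N) := by rw [h1]
end

section
/- Let N ≥ 1 and k_1, …, k_N be natural numbers each at least 3, with K_0 = 0, K_j = k_1 + ⋯ + k_j, M = K_N, and leaf set T ⊆ {0,1}^M. Let P be the tree consisting of all prefixes (of every length from 0 to M) of elements of T. Then P is lacunary of order exactly N. -/
/-- The `i`-th block of a leaf: first bit `c`, followed by `m - 1` copies of `!c`.
With `c = false` this is `a_i = 0 1 1 ⋯ 1`, with `c = true` it is `b_i = 1 0 0 ⋯ 0`. -/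
def block (c : Bool) (m : ℕ) : List Bool := c :: List.replicate (m - 1) (!c)

/-- The leaf set as lists: concatenations `s_1 s_2 ⋯ s_n` with `s_i ∈ {a_i, b_i}`. -/
def leavesList (k : ℕ → ℕ) : ℕ → Set (List Bool)
  | 0 => {[]}
  | n + 1 => {l | ∃ p ∈ leavesList k n, ∃ c : Bool, l = p ++ block c (k n)}

/-- The prefix closure of a set of binary strings. -/
def prefixClosure (T : Set (List Bool)) : Set (List Bool) := {p | ∃ t ∈ T, p <+: t}

/-- A tree is a set of finite binary strings closed under taking prefixes. -/
def IsTree (S : Set (List Bool)) : Prop := ∀ l ∈ S, ∀ p : List Bool, p <+: l → p ∈ S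

/-- `w` is a splitting vertex of `S` if both one-bit extensions of `w` lie in `S`. -/
def SplitVertex (S : Set (List Bool)) (w : List Bool) : Prop :=
  w ∈ S ∧ w ++ [false] ∈ S ∧ w ++ [true] ∈ S

/-- `LacunaryLE n S`: `S` is lacunary of order at most `n`. Order `≤ 0` means
totally ordered by the prefix relation (a single, possibly truncated, ray);
order `≤ n + 1` means there is a tree, lacunary of order `≤ n`, containing all
splitting vertices of `S`. -/
def LacunaryLE : ℕ → Set (List Bool) → Prop
  | 0 => fun S => ∀ a ∈ S, ∀ b ∈ S, a <+: b ∨ b <+: a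
  | n + 1 => fun S => ∃ L : Set (List Bool), IsTree L ∧ LacunaryLE n L ∧
      ∀ w : List Bool, SplitVertex S w → w ∈ L

/- ### auxiliary lemmas -/


lemma isTree_prefixClosure (T : Set (List Bool)) : IsTree (prefixClosure T) := by
  rintro l ⟨t, ht, hlt⟩ p hpl
  exact ⟨t, ht, hpl.trans hlt⟩

lemma len_leaves (k : ℕ → ℕ) : ∀ n, (∀ i < n, 1 ≤ k i) → ∀ l ∈ leavesList k n,
    l.length = Kk k n := by
  intro n
  induction n with
  | zero => rintro _ l hl; simp only [leavesList, Set.mem_singleton_iff] at hl; simp [hl, Kk]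
  | succ n ih =>
    rintro hk l ⟨p, hp, c, rfl⟩
    have h1 : 1 ≤ k n := hk n (Nat.lt_succ_self n)
    have := ih (fun i hi => hk i (hi.trans (Nat.lt_succ_self n))) p hp
    simp only [List.length_append, this, block, List.length_cons, List.length_replicate, Kk,
      Finset.sum_range_succ]
    omega

lemma leaves_ext (k : ℕ → ℕ) : ∀ n, ∀ p ∈ leavesList k n, ∃ l ∈ leavesList k (n + 1), p <+: l := by
  intro n p hp
  exact ⟨p ++ block false (k n), ⟨p, hp, false, rfl⟩, List.prefix_append _ _⟩

lemma leafClosure_mono (k : ℕ → ℕ) (n : ℕ) :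
    prefixClosure (leavesList k n) ⊆ prefixClosure (leavesList k (n + 1)) := by
  rintro w ⟨t, ht, hwt⟩
  obtain ⟨l, hl, htl⟩ := leaves_ext k n t ht
  exact ⟨l, hl, hwt.trans htl⟩

/-- boundary case: a splitting vertex of the level-(n+1) tree of length ≥ K n
is exactly a concatenation of n blocks. -/
lemma bnd (k : ℕ → ℕ) (n : ℕ) (hk : ∀ i < n, 1 ≤ k i) (w : List Bool)
    (hlen : Kk k n ≤ w.length)
    (h0 : (w ++ [false]) ∈ prefixClosure (leavesList k (n + 1)))
    (h1 : (w ++ [true]) ∈ prefixClosure (leavesList k (n + 1))) :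
    w ∈ leavesList k n := by
  obtain ⟨l1, ⟨p1, hp1, c1, rfl⟩, hw0⟩ := h0
  obtain ⟨l2, ⟨p2, hp2, c2, rfl⟩, hw1⟩ := h1
  have lp1 : p1.length = Kk k n := len_leaves k n hk p1 hp1
  have lp2 : p2.length = Kk k n := len_leaves k n hk p2 hp2
  -- p1 <+: w
  have hp1w : p1 <+: w := by
    have : p1 <+: w ++ [false] :=
      List.prefix_of_prefix_length_le (List.prefix_append _ _) hw0 (by simp; omega)
    exact List.prefix_of_prefix_length_le this (List.prefix_append _ _) (by omega)
  have hp2w : p2 <+: w := by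
    have : p2 <+: w ++ [true] :=
      List.prefix_of_prefix_length_le (List.prefix_append _ _) hw1 (by simp; omega)
    exact List.prefix_of_prefix_length_le this (List.prefix_append _ _) (by omega)
  have hpp : p1 = p2 := by
    refine (List.prefix_of_prefix_length_le hp1w hp2w (by omega)).eq_of_length (by omega)
  obtain ⟨r, rfl⟩ := hp1w
  rw [List.append_assoc, List.prefix_append_right_inj] at hw0
  rw [← hpp, List.append_assoc, List.prefix_append_right_inj] at hw1
  match r with
  | [] => simpa using hp1
  | d :: r' =>
    simp only [List.cons_append, block, List.cons_prefix_cons] at hw0 hw1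
    obtain ⟨rfl, hw0⟩ := hw0
    obtain ⟨h', hw1⟩ := hw1
    rw [← h'] at hw1
    -- two prefixes of the same list, of equal length, must be equal
    have := (List.prefix_of_prefix_length_le hw0 hw1 (by simp)).eq_of_length (by simp)
    have := List.append_cancel_left this
    simp at this

lemma key_split (k : ℕ → ℕ) : ∀ n, (∀ i < n + 1, 1 ≤ k i) → ∀ w : List Bool,
    (w ++ [false]) ∈ prefixClosure (leavesList k (n + 1)) →
    (w ++ [true]) ∈ prefixClosure (leavesList k (n + 1)) →
    w ∈ prefixClosure (leavesList k n) := by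
  intro n
  induction n with
  | zero =>
    intro hk w h0 h1
    have := bnd k 0 (by omega) w (by simp [Kk]) h0 h1
    exact ⟨w, this, List.prefix_rfl⟩
  | succ n ih =>
    intro hk w h0 h1
    by_cases hlen : Kk k (n + 1) ≤ w.length
    · exact ⟨w, bnd k (n + 1) (fun i hi => hk i (by omega)) w hlen h0 h1, List.prefix_rfl⟩
    · push_neg at hlen
      have hk' : ∀ i < n + 1, 1 ≤ k i := fun i hi => hk i (by omega)
      apply leafClosure_mono
      apply ih hk' w
      · obtain ⟨l1, ⟨p1, hp1, c1, rfl⟩, hw0⟩ := h0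
        have lp1 : p1.length = Kk k (n + 1) := len_leaves k (n + 1) hk' p1 hp1
        exact ⟨p1, hp1,
          List.prefix_of_prefix_length_le hw0 (List.prefix_append _ _) (by simp; omega)⟩
      · obtain ⟨l2, ⟨p2, hp2, c2, rfl⟩, hw1⟩ := h1
        have lp2 : p2.length = Kk k (n + 1) := len_leaves k (n + 1) hk' p2 hp2
        exact ⟨p2, hp2,
          List.prefix_of_prefix_length_le hw1 (List.prefix_append _ _) (by simp; omega)⟩

lemma upper (k : ℕ → ℕ) : ∀ n, (∀ i < n, 1 ≤ k i) →
    LacunaryLE n (prefixClosure (leavesList k n)) := by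
  intro n
  induction n with
  | zero =>
    intro _ a ha b hb
    obtain ⟨t, ht, hat⟩ := ha
    obtain ⟨s, hs, hbs⟩ := hb
    simp only [leavesList, Set.mem_singleton_iff] at ht hs
    subst ht; subst hs
    rw [List.prefix_nil] at hat hbs
    simp [hat, hbs]
  | succ n ih =>
    intro hk
    refine ⟨prefixClosure (leavesList k n), isTree_prefixClosure _,
      ih (fun i hi => hk i (by omega)), ?_⟩
    rintro w ⟨_, h0, h1⟩
    exact key_split k n hk w h0 h1

/- ### lower bound -/

/-- a full binary configuration of `n+1` levels of splitting vertices rooted at `w`. -/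
def Conf (S : Set (List Bool)) : ℕ → List Bool → Prop
  | 0, w => SplitVertex S w
  | n + 1, w => SplitVertex S w ∧ ∃ u v : List Bool,
      w ++ [false] <+: u ∧ w ++ [true] <+: v ∧ Conf S n u ∧ Conf S n v

lemma conf_split (S : Set (List Bool)) : ∀ n w, Conf S n w → SplitVertex S w := by
  intro n w h
  cases n with
  | zero => exact h
  | succ n => exact h.1

lemma conf_down (S L : Set (List Bool)) (hL : IsTree L)
    (hsub : ∀ w, SplitVertex S w → w ∈ L) :
    ∀ n w, Conf S (n + 1) w → Conf L n w := by
  intro n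
  induction n with
  | zero =>
    rintro w ⟨hw, u, v, hu, hv, hcu, hcv⟩
    have huL : u ∈ L := hsub u (conf_split S _ u hcu)
    have hvL : v ∈ L := hsub v (conf_split S _ v hcv)
    exact ⟨hL u huL w (List.IsPrefix.trans ⟨[false], rfl⟩ hu), hL u huL _ hu, hL v hvL _ hv⟩
  | succ n ih =>
    rintro w ⟨hw, u, v, hu, hv, hcu, hcv⟩
    have huL : u ∈ L := hsub u (conf_split S _ u hcu)
    have hvL : v ∈ L := hsub v (conf_split S _ v hcv)
    refine ⟨⟨hL u huL w (List.IsPrefix.trans ⟨[false], rfl⟩ hu), hL u huL _ hu, hL v hvL _ hv⟩,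
      u, v, hu, hv, ih u hcu, ih v hcv⟩

lemma no_conf : ∀ n (S : Set (List Bool)), LacunaryLE n S → ∀ w, ¬ Conf S n w := by
  intro n
  induction n with
  | zero =>
    rintro S hS w ⟨_, h0, h1⟩
    rcases hS _ h0 _ h1 with h | h
    · have := h.eq_of_length (by simp)
      have := List.append_cancel_left this
      simp at this
    · have := h.eq_of_length (by simp)
      have := List.append_cancel_left this
      simp at this
  | succ n ih =>
    rintro S ⟨L, hLt, hLlac, hsub⟩ w hc
    exact ih L hLlac w (conf_down S L hLt hsub n w hc)

lemma mem_closure_of_leaves (k : ℕ → ℕ) : ∀ n, ∀ j ≤ n, ∀ p ∈ leavesList k j,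
    p ∈ prefixClosure (leavesList k n) := by
  intro n
  induction n with
  | zero =>
    intro j hj p hp
    have : j = 0 := by omega
    subst this
    exact ⟨p, hp, List.prefix_rfl⟩
  | succ n ihn =>
    intro j hj p hp
    rcases Nat.lt_or_ge j (n + 1) with h | h
    · exact leafClosure_mono k n (ihn j (by omega) p hp)
    · have : j = n + 1 := by omega
      subst this
      exact ⟨p, hp, List.prefix_rfl⟩

lemma conf_exists (k : ℕ → ℕ) (n : ℕ) : ∀ d m, m + d + 1 ≤ n → ∀ w ∈ leavesList k m,
    Conf (prefixClosure (leavesList k n)) d w := by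
  have split_of : ∀ m, m + 1 ≤ n → ∀ w ∈ leavesList k m,
      SplitVertex (prefixClosure (leavesList k n)) w := by
    intro m hm w hw
    have ext := mem_closure_of_leaves k n
    refine ⟨ext m (by omega) w hw, ?_, ?_⟩
    · have h : w ++ block false (k m) ∈ leavesList k (m + 1) := ⟨w, hw, false, rfl⟩
      obtain ⟨l, hl, hpl⟩ : w ++ block false (k m) ∈ prefixClosure (leavesList k n) :=
        ext (m + 1) hm _ h
      exact ⟨l, hl, List.IsPrefix.trans (by simp [block]) hpl⟩
    · have h : w ++ block true (k m) ∈ leavesList k (m + 1) := ⟨w, hw, true, rfl⟩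
      obtain ⟨l, hl, hpl⟩ : w ++ block true (k m) ∈ prefixClosure (leavesList k n) :=
        ext (m + 1) hm _ h
      exact ⟨l, hl, List.IsPrefix.trans (by simp [block]) hpl⟩
  intro d
  induction d with
  | zero => intro m hm w hw; exact split_of m (by omega) w hw
  | succ d ih =>
    intro m hm w hw
    refine ⟨split_of m (by omega) w hw, w ++ block false (k m), w ++ block true (k m),
      by simp [block], by simp [block], ?_, ?_⟩
    · exact ih (m + 1) (by omega) _ ⟨w, hw, false, rfl⟩
    · exact ih (m + 1) (by omega) _ ⟨w, hw, true, rfl⟩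

/-- The prefix closure `P` of the leaf set `T` is lacunary of order exactly `N`:
it is lacunary of order `≤ N` but not of order `≤ N - 1`. -/
theorem statement11 (N : ℕ) (hN : 1 ≤ N) (k : ℕ → ℕ) (hk : ∀ i < N, 3 ≤ k i) :
    LacunaryLE N (prefixClosure (leavesList k N)) ∧
      ¬ LacunaryLE (N - 1) (prefixClosure (leavesList k N)) := by
  constructor
  · exact upper k N (fun i hi => by have := hk i hi; omega)
  · intro h
    have hc : Conf (prefixClosure (leavesList k N)) (N - 1) [] := by
      apply conf_exists k N (N - 1) 0 (by omega)
      simp [leavesList]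
    exact no_conf (N - 1) _ h [] hc
end

section
/- Let N ≥ 1 and k_1, …, k_N be natural numbers each at least 3, with K_0 = 0, K_j = k_1 + ⋯ + k_j, M = K_N, and leaf set T ⊆ {0,1}^M. Suppose moreover that 8·(2^{-k_1} + 2^{-k_2} + ⋯ + 2^{-k_N}) < ε for some ε > 0. Then for every sticky map σ : {0,1}^M → {0,1}^M whose range is contained in T, and for every u, v ∈ {0,1}^M with u ≠ v such that |ρ(u, σ(u)) ∩ ρ(v, σ(v))| > 0, one has σ(u) ≠ σ(v); moreover the least index at which σ(u) and σ(v) differ equals K_j + 1 for some 0 ≤ j ≤ N − 1, and u and v differ at some index i ≤ K_j + 1. -/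
open MeasureTheory

/-- A non-horizontal line in the plane has Lebesgue measure zero. -/
lemma line_null (c s : ℝ) : volume {p : ℝ × ℝ | p.2 = c + p.1 * s} = 0 := by
  set L : ℝ × ℝ →ₗ[ℝ] ℝ := LinearMap.snd ℝ ℝ ℝ - s • LinearMap.fst ℝ ℝ ℝ with hL
  have hset : {p : ℝ × ℝ | p.2 = c + p.1 * s}
      = (AffineSubspace.mk' ((0 : ℝ), c) (LinearMap.ker L) : Set (ℝ × ℝ)) := by
    ext p
    simp only [Set.mem_setOf_eq, SetLike.mem_coe, AffineSubspace.mem_mk',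
      LinearMap.mem_ker, hL, LinearMap.sub_apply, LinearMap.smul_apply, LinearMap.snd_apply,
      LinearMap.fst_apply]
    constructor
    · intro h; simp [h]; ring
    · intro h
      have : (p - (0, c)).2 - s * (p - (0, c)).1 = 0 := by simpa using h
      simp at this; linarith [this]
  rw [hset]
  apply Measure.addHaar_affineSubspace
  intro htop
  have h1 : ((0 : ℝ), c + 1) ∈ AffineSubspace.mk' ((0 : ℝ), c) (LinearMap.ker L) := by
    rw [htop]; trivial
  rw [AffineSubspace.mem_mk', LinearMap.mem_ker] at h1
  simp [hL] at h1

/-- The integer numerator of `val u`. -/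
def natsum {M : ℕ} (u : Fin M → Bool) : ℕ :=
  ∑ j : Fin M, if u j then 2 ^ (M - 1 - (j : ℕ)) else 0

lemma val_eq_natsum {M : ℕ} (u : Fin M → Bool) :
    val u = (natsum u : ℝ) * (2 : ℝ)⁻¹ ^ M := by
  rw [val, natsum]
  push_cast
  rw [Finset.sum_mul]
  apply Finset.sum_congr rfl
  intro j _
  have hj : (j : ℕ) + 1 ≤ M := j.isLt
  by_cases h : u j
  · simp only [h, if_true, one_mul]
    have key : (2 : ℝ) ^ (M - 1 - (j : ℕ)) * (2 : ℝ)⁻¹ ^ M = (2:ℝ)⁻¹ ^ ((j:ℕ) + 1) := by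
      rw [inv_pow, inv_pow]
      field_simp
      rw [← pow_add]
      congr 1
      omega
    rw [key]
  · simp [h]

lemma natsum_inj {M : ℕ} (u v : Fin M → Bool) (h : natsum u = natsum v) : u = v := by
  have key : ∀ w : Fin M → Bool,
      natsum w = ((finFunctionFinEquiv (m := 2) (n := M)
        (fun i : Fin M => if w i.rev then (1 : Fin 2) else 0) : Fin (2^M)) : ℕ) := by
    intro w
    rw [finFunctionFinEquiv_apply, natsum]
    apply Fintype.sum_equiv (Fin.revPerm)
    intro j
    by_cases hw : w j <;> simp [hw, Fin.rev_rev, Fin.val_rev] <;> omega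
  rw [key u, key v] at h
  have h2 : (finFunctionFinEquiv (m := 2) (n := M)
        (fun i : Fin M => if u i.rev then (1 : Fin 2) else 0))
      = finFunctionFinEquiv (m := 2) (n := M)
        (fun i : Fin M => if v i.rev then (1 : Fin 2) else 0) :=
    Fin.ext h
  have h3 := finFunctionFinEquiv.injective h2
  funext j
  have := congrFun h3 j.rev
  simp only [Fin.rev_rev] at this
  by_cases hu : u j <;> by_cases hv : v j <;> simp_all

/-- Distinct binary strings have values at distance at least `2⁻¹ ^ M`. -/
lemma val_gap {M : ℕ} {u v : Fin M → Bool} (h : u ≠ v) :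
    (2 : ℝ)⁻¹ ^ M ≤ |val u - val v| := by
  have hne : natsum u ≠ natsum v := fun hc => h (natsum_inj u v hc)
  rw [val_eq_natsum, val_eq_natsum, ← sub_mul, abs_mul,
    abs_of_pos (by positivity : (0:ℝ) < (2:ℝ)⁻¹ ^ M)]
  have h1 : (1 : ℝ) ≤ |(natsum u : ℝ) - (natsum v : ℝ)| := by
    have hz : (1:ℤ) ≤ |(natsum u : ℤ) - (natsum v : ℤ)| :=
      Int.one_le_abs (sub_ne_zero.mpr (by exact_mod_cast hne))
    exact_mod_cast hz
  nlinarith [pow_pos (by norm_num : (0:ℝ) < (2:ℝ)⁻¹) M]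

/-- Two parallelograms with the same slope whose base values differ by at least
`2⁻¹ ^ M` intersect in a null set. -/
lemma inter_line_null {M : ℕ} (u v w : Fin M → Bool)
    (h : val v + (2:ℝ)⁻¹ ^ M ≤ val u) :
    volume (rho u w ∩ rho v w) = 0 := by
  refine measure_mono_null ?_ (line_null (val u) (val w))
  rintro ⟨x, y⟩ ⟨⟨_, _, h1, _⟩, ⟨_, _, _, h4⟩⟩
  show y = val u + x * val w
  simp only [rho, Set.mem_setOf_eq] at *
  linarith

/-- For a sticky map into the leaf set: if `u ≠ v` and `ρ(u,σ u)`, `ρ(v,σ v)` overlap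
with positive measure, then `σ u ≠ σ v`, the least index (0-indexed) at which
`σ u` and `σ v` differ is `K_j` for some `0 ≤ j ≤ N-1`, and `u, v` differ at some
index `≤ K_j` (0-indexed), i.e. within their first `K_j + 1` coordinates. -/
theorem statement13 (N : ℕ) (hN : 1 ≤ N) (k : ℕ → ℕ) (hk : ∀ i < N, 3 ≤ k i)
    (ε : ℝ) (hε : 0 < ε)
    (hsum : 8 * (∑ i ∈ Finset.range N, (2 : ℝ)⁻¹ ^ (k i)) < ε)
    (σ : (Fin (Kk k N) → Bool) → (Fin (Kk k N) → Bool))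
    (hσ : Sticky σ) (hran : ∀ v, σ v ∈ leafSet N k)
    (u v : Fin (Kk k N) → Bool) (huv : u ≠ v)
    (hvol : 0 < volume (rho u (σ u) ∩ rho v (σ v))) :
    σ u ≠ σ v ∧
      ∃ j, j ≤ N - 1 ∧
        (∃ i₀ : Fin (Kk k N), (i₀ : ℕ) = Kk k j ∧ σ u i₀ ≠ σ v i₀ ∧
            (∀ i : Fin (Kk k N), (i : ℕ) < (i₀ : ℕ) → σ u i = σ v i)) ∧
        ∃ i : Fin (Kk k N), (i : ℕ) ≤ Kk k j ∧ u i ≠ v i := by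
  -- Part 1: σ u ≠ σ v
  have hne : σ u ≠ σ v := by
    intro heq
    have gap := val_gap huv
    have h0 : volume (rho u (σ u) ∩ rho v (σ v)) = 0 := by
      rcases abs_cases (val u - val v) with ⟨he, _⟩ | ⟨he, _⟩
      · rw [heq]
        exact inter_line_null u v (σ v) (by linarith)
      · rw [Set.inter_comm, heq]
        exact inter_line_null v u (σ v) (by linarith)
    exact absurd h0 hvol.ne'
  -- least differing index of σ u and σ v
  have hex : ∃ n : ℕ, ∃ hn : n < Kk k N, σ u ⟨n, hn⟩ ≠ σ v ⟨n, hn⟩ := by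
    rcases Function.ne_iff.mp hne with ⟨i, hi⟩
    exact ⟨i, i.isLt, by simpa using hi⟩
  set m := Nat.find hex with hmdef
  obtain ⟨hmM, hmne⟩ := Nat.find_spec hex
  have hmin : ∀ i : Fin (Kk k N), (i : ℕ) < m → σ u i = σ v i := by
    intro i hi
    by_contra hc
    exact Nat.find_min hex hi ⟨i.isLt, by simpa using hc⟩
  -- the block containing m
  have hexQ : ∃ n, m < Kk k (n + 1) := by
    refine ⟨N - 1, ?_⟩
    have hNe : N - 1 + 1 = N := by omega
    rw [hNe]
    exact hmM
  set j := Nat.find hexQ with hjdef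
  have hj1 : m < Kk k (j + 1) := Nat.find_spec hexQ
  have hjle : j ≤ N - 1 := Nat.find_le (by
    have hNe : N - 1 + 1 = N := by omega
    rw [hNe]; exact hmM)
  have hj2 : Kk k j ≤ m := by
    rcases Nat.eq_zero_or_pos j with h | h
    · simp [h, Kk]
    · have hlt : j - 1 < j := by omega
      have := Nat.find_min hexQ hlt
      push_neg at this
      have hNe : j - 1 + 1 = j := by omega
      rwa [hNe] at this
  have hjN : j < N := by omega
  have hstep : Kk k (j + 1) = Kk k j + k j := Finset.sum_range_succ k j
  have hkj : 3 ≤ k j := hk j hjN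
  -- m is the start of block j
  have hmKj : m = Kk k j := by
    by_contra hmne'
    have hlt : Kk k j < m := lt_of_le_of_ne hj2 (Ne.symm hmne')
    have hKjM : Kk k j < Kk k N := lt_trans hlt hmM
    obtain ⟨s, hs⟩ := hran u
    obtain ⟨s', hs'⟩ := hran v
    have h1 := hs j hjN ⟨Kk k j, hKjM⟩ (le_refl _) (by show Kk k j < Kk k (j + 1); rw [hstep]; omega)
    have h1' := hs' j hjN ⟨Kk k j, hKjM⟩ (le_refl _) (by show Kk k j < Kk k (j + 1); rw [hstep]; omega)
    rw [if_pos rfl] at h1 h1'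
    have heqi₁ : σ u ⟨Kk k j, hKjM⟩ = σ v ⟨Kk k j, hKjM⟩ := hmin _ hlt
    have hss' : s j = s' j := by rw [← h1, ← h1', heqi₁]
    have h2 := hs j hjN ⟨m, hmM⟩ hj2 hj1
    have h2' := hs' j hjN ⟨m, hmM⟩ hj2 hj1
    rw [if_neg hmne'] at h2 h2'
    exact hmne (by rw [h2, h2', hss'])
  -- u and v must differ at an index ≤ K_j
  have hlast : ∃ i : Fin (Kk k N), (i : ℕ) ≤ Kk k j ∧ u i ≠ v i := by
    by_contra hc
    push_neg at hc
    have := hσ (Kk k j + 1) (by omega) u v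
      (fun i hi => hc i (by omega)) ⟨m, hmM⟩ (by show m < Kk k j + 1; omega)
    exact hmne this
  exact ⟨hne, j, hjle, ⟨⟨m, hmM⟩, hmKj, hmne, hmin⟩, hlast⟩
end
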